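/- arXiv:2206.01551 — 9 statements merged into one kernel-verified Lean document; each statement's English description precedes it below -/
import Mathlib

section
/- Let V be a finite-dimensional F_q-subspace of a field extension E of F_q, where E has characteristic p and q is a power of p. Then the polynomial ∏_{v ∈ V} (x − v) is a q-linearized polynomial, i.e., it has the form Σ_i c_i x^{q^i} with coefficients in E. -/
open Polynomial

/-!
Write `P_W = ∏_{w ∈ W} (X - w)`. The `q`-linearized polynomials form an `E`-subspace of `E[X]`
that is closed under `f ↦ f ^ q` (Frobenius is additive), and each of them is `F_q`-linear as a
function, so `f.comp (X - c • t) = f - c • f(t)` for `c ∈ F_q`. If `u ∉ W`, the subspace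
`F_q u + W` is the disjoint union of the cosets `c • u + W`, hence
`P_{F_q u + W} = ∏_c P_W(X - c • u) = ∏_c (P_W - c • P_W(u)) = P_W ^ q - P_W(u) ^ (q - 1) • P_W`
by the identity `∏_{c ∈ F_q} (Y - c • z) = Y ^ q - z ^ (q - 1) • Y`, a rescaling of
`∏_c (X - c) = X ^ q - X`. Induction along a finite spanning set of `V` concludes.
-/

open Finset

namespace FiniteField

variable {K : Type*} [Field K] [Fintype K] {A : Type*} [CommRing A] [Algebra K A]

theorem frobeniusAlgHom_pow_apply (i : ℕ) (x : A) :
    (frobeniusAlgHom K A ^ i) x = x ^ Fintype.card K ^ i := by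
  rw [AlgHom.coe_pow, coe_frobeniusAlgHom, pow_iterate]

theorem prod_X_sub_C_eq_X_pow_card_sub_X :
    ∏ c : K, (X - C c) = (X ^ Fintype.card K - X : K[X]) := by
  have hdeg : (X ^ Fintype.card K - X : K[X]).natDegree = Fintype.card K :=
    X_pow_card_sub_X_natDegree_eq K Fintype.one_lt_card
  have hmonic : (X ^ Fintype.card K - X : K[X]).Monic :=
    monic_X_pow_sub (by rw [degree_X]; exact_mod_cast Fintype.one_lt_card)
  have h := prod_multiset_X_sub_C_of_monic_of_roots_card_eq hmonic
    (by rw [roots_X_pow_card_sub_X, hdeg]; rfl)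
  rwa [roots_X_pow_card_sub_X] at h

theorem prod_sub_algebraMap (w : A) :
    ∏ c : K, (w - algebraMap K A c) = w ^ Fintype.card K - w := by
  simpa using congrArg (aeval w) (prod_X_sub_C_eq_X_pow_card_sub_X (K := K))

theorem prod_sub_smul_of_isUnit (y : A) {z : A} (hz : IsUnit z) :
    ∏ c : K, (y - c • z) = y ^ Fintype.card K - z ^ (Fintype.card K - 1) * y := by
  obtain ⟨u, rfl⟩ := hz
  set w : A := ↑u⁻¹ * y
  have hy : y = u * w := by simp [w]
  obtain ⟨n, hn⟩ := Nat.exists_eq_add_one_of_ne_zero (Fintype.card_ne_zero (α := K))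
  calc ∏ c : K, (y - c • (u : A)) = ∏ c : K, ((u : A) * (w - algebraMap K A c)) := by
        refine prod_congr rfl fun c _ ↦ ?_
        rw [hy, Algebra.smul_def]
        ring
    _ = (u : A) ^ Fintype.card K * (w ^ Fintype.card K - w) := by
        rw [prod_mul_distrib, prod_const, card_univ, prod_sub_algebraMap]
    _ = y ^ Fintype.card K - (u : A) ^ (Fintype.card K - 1) * y := by
        rw [hy, hn, Nat.add_sub_cancel]
        ring

end FiniteField

namespace Submodule

variable {K E : Type*} [Field K] [Fintype K] [AddCommGroup E] [Module K E]

theorem prod_toFinset_sup_span_singleton {M : Type*} [CommMonoid M] {W : Submodule K E} {u : E}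
    (hu : u ∉ W) (hW : (W : Set E).Finite) (hW' : ((K ∙ u ⊔ W : Submodule K E) : Set E).Finite)
    (g : E → M) : ∏ v ∈ hW'.toFinset, g v = ∏ c : K, ∏ w ∈ hW.toFinset, g (c • u + w) := by
  rw [← prod_product']
  symm
  refine prod_nbij (fun x ↦ x.1 • u + x.2) ?_ ?_ ?_ fun _ _ ↦ rfl
  · rintro ⟨c, w⟩ hw
    simp only [mem_product, mem_univ, Set.Finite.mem_toFinset, SetLike.mem_coe, true_and] at hw ⊢
    exact add_mem (mem_sup_left (smul_mem _ c (mem_span_singleton_self u))) (mem_sup_right hw)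
  · rintro ⟨c₁, w₁⟩ h₁ ⟨c₂, w₂⟩ h₂ heq
    simp only [coe_product, coe_univ, Set.Finite.coe_toFinset, Set.mem_prod, Set.mem_univ,
      SetLike.mem_coe, true_and] at h₁ h₂ heq
    have hsub : (c₁ - c₂) • u = w₂ - w₁ := by
      rw [sub_smul, sub_eq_sub_iff_add_eq_add, heq, add_comm]
    have hc : c₁ = c₂ := by
      by_contra hc
      exact hu ((smul_mem_iff W (sub_ne_zero.2 hc)).1 (hsub ▸ sub_mem h₂ h₁))
    subst hc
    simp [add_left_cancel heq]
  · rintro v hv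
    simp only [Set.Finite.coe_toFinset, SetLike.mem_coe, Submodule.mem_sup, mem_span_singleton,
      exists_exists_eq_and] at hv
    obtain ⟨c, w, hw, rfl⟩ := hv
    exact ⟨(c, w), by simpa using hw, rfl⟩

end Submodule

namespace Polynomial

noncomputable def linearizedSubmodule (R : Type*) [CommSemiring R] (q : ℕ) : Submodule R R[X] :=
  Submodule.span R (Set.range fun i : ℕ ↦ X ^ q ^ i)

section CommSemiring

variable {R : Type*} [CommSemiring R] {q : ℕ}

theorem X_pow_pow_mem_linearizedSubmodule (i : ℕ) :
    (X : R[X]) ^ q ^ i ∈ linearizedSubmodule R q :=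
  Submodule.subset_span ⟨i, rfl⟩

theorem X_mem_linearizedSubmodule : (X : R[X]) ∈ linearizedSubmodule R q := by
  simpa using X_pow_pow_mem_linearizedSubmodule (R := R) (q := q) 0

theorem exists_eq_sum_of_mem_linearizedSubmodule {f : R[X]} (hf : f ∈ linearizedSubmodule R q) :
    ∃ (m : ℕ) (c : ℕ → R), f = ∑ i ∈ range (m + 1), C (c i) * X ^ q ^ i := by
  obtain ⟨c, rfl⟩ := Finsupp.mem_span_range_iff_exists_finsupp.1 hf
  refine ⟨c.support.sup id, c, ?_⟩
  rw [Finsupp.sum_of_support_subset c (subset_range_sup_succ _) _ (by simp)]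
  simp only [smul_eq_C_mul]

end CommSemiring

section FiniteField

variable {K : Type*} [Field K] [Fintype K] {A : Type*} [CommRing A] [Algebra K A]

theorem pow_card_mem_linearizedSubmodule {f : A[X]}
    (hf : f ∈ linearizedSubmodule A (Fintype.card K)) :
    f ^ Fintype.card K ∈ linearizedSubmodule A (Fintype.card K) := by
  induction hf using Submodule.span_induction with
  | mem _ h =>
    obtain ⟨i, rfl⟩ := h
    rw [← pow_mul, ← pow_succ]
    exact X_pow_pow_mem_linearizedSubmodule _
  | zero => simp
  | add f g _ _ hf hg =>
    rw [← FiniteField.frobeniusAlgHom_apply K, map_add]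
    exact add_mem hf hg
  | smul e f _ hf =>
    rw [_root_.smul_pow]
    exact Submodule.smul_mem _ _ hf

theorem comp_X_sub_C_smul_of_mem_linearizedSubmodule {f : A[X]}
    (hf : f ∈ linearizedSubmodule A (Fintype.card K)) (c : K) (t : A) :
    f.comp (X - C (c • t)) = f - c • C (f.eval t) := by
  induction hf using Submodule.span_induction with
  | mem _ h =>
    obtain ⟨i, rfl⟩ := h
    have hfrob := map_sub (FiniteField.frobeniusAlgHom K A[X] ^ i) X (C (c • t))
    simp only [FiniteField.frobeniusAlgHom_pow_apply, ← C_pow, _root_.smul_pow,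
      FiniteField.pow_card_pow] at hfrob
    rw [pow_comp, X_comp, hfrob, eval_pow, eval_X, smul_C]
  | zero => simp
  | add f g _ _ hf hg =>
    rw [add_comp, hf, hg, eval_add, C_add, smul_add]
    abel
  | smul e f _ hf =>
    rw [smul_comp, hf, eval_smul, smul_sub, smul_C, smul_C, smul_C, smul_comm]

end FiniteField

section Subspace

variable {K E : Type*} [Field K] [Fintype K] [Field E] [Algebra K E]

theorem prod_X_sub_C_sup_span_singleton {W W' : Submodule K E} {u : E} (hu : u ∉ W)
    (hW'eq : W' = K ∙ u ⊔ W) (hW : (W : Set E).Finite) (hW' : (W' : Set E).Finite)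
    (hf : ∏ w ∈ hW.toFinset, (X - C w) ∈ linearizedSubmodule E (Fintype.card K)) :
    ∏ v ∈ hW'.toFinset, (X - C v) =
      (∏ w ∈ hW.toFinset, (X - C w)) ^ Fintype.card K -
        C ((∏ w ∈ hW.toFinset, (X - C w)).eval u ^ (Fintype.card K - 1)) *
          ∏ w ∈ hW.toFinset, (X - C w) := by
  subst hW'eq
  set f := ∏ w ∈ hW.toFinset, (X - C w)
  have hunit : IsUnit (C (f.eval u)) := by
    refine isUnit_C.2 (IsUnit.mk0 _ ?_)
    simp only [f, eval_prod, eval_sub, eval_X, eval_C, prod_ne_zero_iff, sub_ne_zero]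
    rintro w hw rfl
    exact hu (by simpa using hw)
  calc ∏ v ∈ hW'.toFinset, (X - C v)
      = ∏ c : K, ∏ w ∈ hW.toFinset, (X - C (c • u + w)) :=
        Submodule.prod_toFinset_sup_span_singleton hu hW hW' _
    _ = ∏ c : K, f.comp (X - C (c • u)) := by
        refine prod_congr rfl fun c _ ↦ ?_
        simp only [f, prod_comp, sub_comp, X_comp, C_comp, C_add, sub_add_eq_sub_sub]
    _ = ∏ c : K, (f - c • C (f.eval u)) := by
        simp only [comp_X_sub_C_smul_of_mem_linearizedSubmodule hf]
    _ = _ := by rw [FiniteField.prod_sub_smul_of_isUnit f hunit, ← C_pow]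

theorem prod_X_sub_C_mem_linearizedSubmodule (W : Submodule K E) (hW : (W : Set E).Finite) :
    ∏ v ∈ hW.toFinset, (X - C v) ∈ linearizedSubmodule E (Fintype.card K) := by
  classical
  obtain ⟨s, rfl⟩ : ∃ s : Finset E, Submodule.span K (s : Set E) = W := ⟨hW.toFinset, by simp⟩
  induction s using Finset.induction_on with
  | empty =>
    have h0 : hW.toFinset = {0} := by ext; simp
    rw [h0, prod_singleton, C_0, sub_zero]
    exact X_mem_linearizedSubmodule
  | insert u s hu ih =>
    have hs : (Submodule.span K (s : Set E) : Set E).Finite :=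
      hW.subset (Submodule.span_mono (by simp))
    by_cases hmem : u ∈ Submodule.span K (s : Set E)
    · convert ih hs using 3
      simp [Submodule.span_insert_eq_span hmem]
    · rw [prod_X_sub_C_sup_span_singleton hmem (by rw [coe_insert, Submodule.span_insert]) hs hW
        (ih hs), ← smul_eq_C_mul]
      exact sub_mem (pow_card_mem_linearizedSubmodule (ih hs)) (Submodule.smul_mem _ _ (ih hs))

end Subspace

end Polynomial

theorem stmt_2_general (q : ℕ) (Fq E : Type) [Field Fq] [Fintype Fq] (hFq : Fintype.card Fq = q)
    [Field E] [Algebra Fq E]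
    (V : Submodule Fq E) (hfin : (V : Set E).Finite) :
    ∃ (m : ℕ) (c : ℕ → E),
      ∏ v ∈ hfin.toFinset, (X - C v) =
        ∑ i ∈ Finset.range (m + 1), C (c i) * X ^ q ^ i := by
  subst hFq
  exact exists_eq_sum_of_mem_linearizedSubmodule (prod_X_sub_C_mem_linearizedSubmodule V hfin)

/-- For a finite-dimensional `F_q`-subspace `V` of a field `E` of
characteristic `p`, the polynomial `∏_{v ∈ V} (X - v)` is q-linearized. -/
theorem stmt_2 (p a q : ℕ) [Fact p.Prime] (ha : 0 < a) (hq : q = p ^ a)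
    (Fq E : Type) [Field Fq] [Fintype Fq] (hFq : Fintype.card Fq = q)
    [Field E] [CharP E p] [Algebra Fq E]
    (V : Submodule Fq E) [FiniteDimensional Fq V] (hfin : (V : Set E).Finite) :
    ∃ (m : ℕ) (c : ℕ → E),
      ∏ v ∈ hfin.toFinset, (X - C v) =
        ∑ i ∈ Finset.range (m + 1), C (c i) * X ^ q ^ i :=
  stmt_2_general q Fq E hFq V hfin
end

section
/- Let F be a field of characteristic p containing F_q and let f ∈ F[x] be a separable polynomial. The minimal q-degree of a nonzero q-linearized polynomial L ∈ F[x] divisible by f equals the F_q-dimension of the span of the roots of f in a splitting field of f over F. -/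
/-!
Over `Fq`, evaluation of a `q`-linearized polynomial `L = ∑_{i ≤ d} b_i X^{q^i}` is `Fq`-linear, so
when `b_d ≠ 0` the roots of `L` in `E` form an `Fq`-subspace with at most `q^d` elements. If
`f ∣ L`, this subspace contains the span `V` of the roots of `f`, whence `q^{dim V} ≤ q^d`.

Conversely, every `n`-dimensional `Fq`-subspace `W ⊆ E` is the zero set of a monic
`q`-linearized polynomial of `q`-degree `n`: when `w ∉ W` is adjoined, `L` is replaced by
`L^q - L(w)^{q-1} L`. It is unique, as the difference of two such polynomials has degree
`< q^n = |W|` and vanishes on `W`. Since `V` is stable under `Gal(E/F)`, uniqueness makes the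
coefficients of its polynomial Galois-invariant, hence they lie in `F`; and as `f` is separable
with all its roots in `V`, `f` divides this polynomial.
-/

open Polynomial Finset

section Semiring

variable {R : Type*} [Semiring R]

noncomputable def qLinearized (q k : ℕ) (b : ℕ → R) : R[X] :=
  ∑ i ∈ range (k + 1), C (b i) * X ^ q ^ i

variable {q k : ℕ} {b : ℕ → R}

theorem qLinearized_congr {b' : ℕ → R} (h : ∀ i ≤ k, b i = b' i) :
    qLinearized q k b = qLinearized q k b' :=
  sum_congr rfl fun i hi => by rw [h i (Nat.lt_succ_iff.mp (mem_range.mp hi))]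

theorem coeff_qLinearized_pow (hq : 1 < q) {i : ℕ} (hi : i ≤ k) :
    (qLinearized q k b).coeff (q ^ i) = b i := by
  rw [qLinearized, finsetSum_coeff, sum_eq_single i]
  · simp
  · intro j _ hji
    rw [coeff_C_mul, coeff_X_pow, if_neg fun h => hji (Nat.pow_right_injective hq h).symm, mul_zero]
  · exact fun h => absurd (mem_range.mpr (Nat.lt_succ_of_le hi)) h

theorem natDegree_qLinearized_le (hq : 0 < q) : (qLinearized q k b).natDegree ≤ q ^ k :=
  natDegree_sum_le_of_forall_le _ _ fun _ hi =>
    (natDegree_C_mul_le _ _).trans <| (natDegree_X_pow_le _).trans <|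
      Nat.pow_le_pow_right hq (Nat.lt_succ_iff.mp (mem_range.mp hi))

theorem qLinearized_ne_zero (hq : 1 < q) (hb : b k ≠ 0) : qLinearized q k b ≠ 0 := fun h =>
  hb (by rw [← coeff_qLinearized_pow (b := b) hq le_rfl, h, coeff_zero])

theorem natDegree_qLinearized (hq : 1 < q) (hb : b k ≠ 0) :
    (qLinearized q k b).natDegree = q ^ k :=
  natDegree_eq_of_le_of_coeff_ne_zero (natDegree_qLinearized_le (by omega))
    (by rwa [coeff_qLinearized_pow hq le_rfl])

theorem monic_qLinearized [Nontrivial R] (hq : 1 < q) (hb : b k = 1) :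
    (qLinearized q k b).Monic := by
  rw [Monic, leadingCoeff, natDegree_qLinearized hq (by simp [hb]), coeff_qLinearized_pow hq le_rfl,
    hb]

theorem map_qLinearized {S : Type*} [Semiring S] (φ : R →+* S) :
    (qLinearized q k b).map φ = qLinearized q k (φ ∘ b) := by
  simp [qLinearized, Polynomial.map_sum]

end Semiring

theorem eval_qLinearized {R : Type*} [CommSemiring R] (q k : ℕ) (b : ℕ → R) (x : R) :
    (qLinearized q k b).eval x = ∑ i ∈ range (k + 1), b i * x ^ q ^ i := by
  simp [qLinearized, eval_finsetSum]

theorem natCard_le_natDegree_of_forall_eval_eq_zero {E : Type*} [Field E] {P : E[X]} (hP : P ≠ 0)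
    (S : Set E) (h : ∀ x ∈ S, P.eval x = 0) : Nat.card S ≤ P.natDegree := by
  classical
  have hS : S ⊆ P.roots.toFinset := fun x hx => by simpa [hP] using h x hx
  calc Nat.card S = S.ncard := Nat.card_coe_set_eq S
    _ ≤ (P.roots.toFinset : Set E).ncard := Set.ncard_le_ncard hS (Finset.finite_toSet _)
    _ ≤ P.natDegree := by
      rw [Set.ncard_coe_finset]
      exact (Multiset.toFinset_card_le _).trans (card_roots' P)

theorem finrank_sup_span_singleton_of_finite {K V : Type*} [Field K] [AddCommGroup V] [Module K V]
    {p : Submodule K V} [Module.Finite K p] {v : V} (hv : v ∉ p) :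
    Module.finrank K ↥(p ⊔ K ∙ v) = Module.finrank K p + 1 := by
  have := Submodule.finrank_sup_add_finrank_inf_eq p (K ∙ v)
  rwa [(Submodule.disjoint_span_singleton_of_notMem hv).eq_bot, finrank_bot, add_zero,
    finrank_span_singleton (by rintro rfl; exact hv p.zero_mem)] at this

section FiniteField

variable {Fq E : Type*} [Field Fq] [Fintype Fq] [Field E] [Algebra Fq E]

local notation "q" => Fintype.card Fq

variable (Fq) in
noncomputable def qLinearizedMap (k : ℕ) (b : ℕ → E) : E →ₗ[Fq] E :=
  ∑ i ∈ range (k + 1), b i • ((FiniteField.frobeniusAlgHom Fq E) ^ i).toLinearMap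

theorem qLinearizedMap_apply (k : ℕ) (b : ℕ → E) (x : E) :
    qLinearizedMap Fq k b x = (qLinearized q k b).eval x := by
  simp [qLinearizedMap, eval_qLinearized, LinearMap.sum_apply, FiniteField.coe_frobeniusAlgHom,
    pow_iterate]

theorem eval_qLinearized_eq_zero_of_mem_span {k : ℕ} {b : ℕ → E} {s : Set E}
    (h : ∀ x ∈ s, (qLinearized q k b).eval x = 0) {x : E} (hx : x ∈ Submodule.span Fq s) :
    (qLinearized q k b).eval x = 0 := by
  rw [← qLinearizedMap_apply]
  exact Submodule.span_le (p := LinearMap.ker (qLinearizedMap Fq k b)).mpr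
    (fun y hy => by simpa [qLinearizedMap_apply] using h y hy) hx

theorem pow_finrank_le_natDegree (W : Submodule Fq E) {P : E[X]} (hP : P ≠ 0)
    (h : ∀ x ∈ W, P.eval x = 0) : q ^ Module.finrank Fq W ≤ P.natDegree := by
  classical
  have : Finite W := ((P.roots.toFinset.finite_toSet).subset
    fun x hx => by simpa [hP] using h x hx).to_subtype
  have : Module.Finite Fq W := Module.Finite.of_finite
  rw [← Nat.card_eq_fintype_card, ← Module.natCard_eq_pow_finrank]
  exact natCard_le_natDegree_of_forall_eval_eq_zero hP W h

theorem finrank_le_of_forall_eval_qLinearized_eq_zero (W : Submodule Fq E) {k : ℕ} {b : ℕ → E}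
    (hb : b k ≠ 0) (h : ∀ x ∈ W, (qLinearized q k b).eval x = 0) : Module.finrank Fq W ≤ k := by
  have hq : 1 < q := Fintype.one_lt_card
  refine (Nat.pow_le_pow_iff_right hq).mp ?_
  calc q ^ Module.finrank Fq W ≤ (qLinearized q k b).natDegree :=
        pow_finrank_le_natDegree W (qLinearized_ne_zero hq hb) h
    _ ≤ q ^ k := natDegree_qLinearized_le (by omega)

variable (Fq) in
theorem pow_card_qLinearized (k : ℕ) (b : ℕ → E) :
    qLinearized q k b ^ q = ∑ i ∈ range (k + 1), C (b i ^ q) * X ^ q ^ (i + 1) := by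
  change FiniteField.frobeniusAlgHom Fq E[X] _ = _
  rw [qLinearized, map_sum]
  refine sum_congr rfl fun i _ => ?_
  rw [FiniteField.coe_frobeniusAlgHom]
  dsimp only
  rw [mul_pow, ← C_pow, ← pow_mul, ← pow_succ]

variable (Fq) in
theorem exists_qLinearized_eq_pow_card_sub_C_mul (k : ℕ) (b : ℕ → E) (c : E) :
    ∃ b' : ℕ → E, b' (k + 1) = b k ^ q ∧
      qLinearized q k b ^ q - C c * qLinearized q k b = qLinearized q (k + 1) b' := by
  refine ⟨fun i => (if i = 0 then 0 else b (i - 1) ^ q) - c * if i ≤ k then b i else 0,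
    by simp, ?_⟩
  rw [pow_card_qLinearized Fq]
  simp only [qLinearized, map_sub, map_mul, sub_mul, sum_sub_distrib, mul_sum, mul_assoc]
  rw [sum_range_succ' _ (k + 1), sum_range_succ _ (k + 1)]
  congr 1
  · simp
  · rw [if_neg (Nat.not_succ_le_self k), C_0, zero_mul, mul_zero, add_zero]
    apply sum_congr rfl
    intro i hi
    rw [if_pos (Nat.lt_succ_iff.mp (mem_range.mp hi))]

theorem eval_pow_card_sub_C_mul_eq_zero_of_mem_sup {N : Submodule Fq E} {k : ℕ} {b : ℕ → E}
    (hN : ∀ y ∈ N, (qLinearized q k b).eval y = 0) (w : E) {x : E} (hx : x ∈ N ⊔ Fq ∙ w) :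
    (qLinearized q k b ^ q - C ((qLinearized q k b).eval w ^ (q - 1)) * qLinearized q k b).eval x
      = 0 := by
  set θ := (qLinearized q k b).eval w
  obtain ⟨y, hy, z, hz, rfl⟩ := Submodule.mem_sup.mp hx
  obtain ⟨c, rfl⟩ := Submodule.mem_span_singleton.mp hz
  have hL : (qLinearized q k b).eval (y + c • w) = c • θ := by
    rw [← qLinearizedMap_apply, map_add, map_smul, qLinearizedMap_apply, qLinearizedMap_apply,
      hN y hy, zero_add]
  have hfrob : (c • θ) ^ q = c • θ ^ q := map_smul (FiniteField.frobeniusAlgHom Fq E) c θ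
  rw [eval_sub, eval_pow, eval_mul, eval_C, hL, hfrob, mul_smul_comm,
    pow_sub_one_mul Fintype.card_ne_zero, sub_self]

theorem exists_monic_qLinearized_eval_eq_zero (W : Submodule Fq E) (hW : W.FG) :
    ∃ b : ℕ → E, b (Module.finrank Fq W) = 1 ∧
      ∀ x ∈ W, (qLinearized q (Module.finrank Fq W) b).eval x = 0 := by
  induction W, hW using Submodule.fg_sup_span_induction with
  | bot =>
    refine ⟨fun _ => 1, by simp, fun x hx => ?_⟩
    rw [(Submodule.mem_bot Fq).mp hx, ← qLinearizedMap_apply, map_zero]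
  | sup N w hN ih =>
    obtain ⟨b, hb, hbN⟩ := ih
    by_cases hw : w ∈ N
    · rw [sup_eq_left.mpr ((Submodule.span_singleton_le_iff_mem w N).mpr hw)]
      exact ⟨b, hb, hbN⟩
    have : Module.Finite Fq N := Module.Finite.iff_fg.mpr hN
    obtain ⟨b', hb', hQ⟩ := exists_qLinearized_eq_pow_card_sub_C_mul Fq (Module.finrank Fq N) b
      ((qLinearized q (Module.finrank Fq N) b).eval w ^ (q - 1))
    rw [finrank_sup_span_singleton_of_finite hw]
    exact ⟨b', by rw [hb', hb, one_pow], fun x hx => by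
      rw [← hQ]; exact eval_pow_card_sub_C_mul_eq_zero_of_mem_sup hbN w hx⟩

theorem qLinearized_eq_of_eval_eq_zero (W : Submodule Fq E) {b b' : ℕ → E}
    (hb : b (Module.finrank Fq W) = 1) (hb' : b' (Module.finrank Fq W) = 1)
    (h : ∀ x ∈ W, (qLinearized q (Module.finrank Fq W) b).eval x = 0)
    (h' : ∀ x ∈ W, (qLinearized q (Module.finrank Fq W) b').eval x = 0) :
    qLinearized q (Module.finrank Fq W) b = qLinearized q (Module.finrank Fq W) b' := by
  have hq : 1 < q := Fintype.one_lt_card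
  by_contra hne
  have hL := monic_qLinearized hq hb
  have hL' := monic_qLinearized hq hb'
  have hlt : (qLinearized q (Module.finrank Fq W) b -
      qLinearized q (Module.finrank Fq W) b').natDegree < q ^ Module.finrank Fq W := by
    rw [← natDegree_qLinearized hq (b := b) (by simp [hb])]
    refine natDegree_lt_natDegree (sub_ne_zero.mpr hne) (degree_sub_lt_left ?_ hL.ne_zero
      (by rw [hL.leadingCoeff, hL'.leadingCoeff]))
    rw [degree_eq_natDegree hL.ne_zero, degree_eq_natDegree hL'.ne_zero,
      natDegree_qLinearized hq (by simp [hb]), natDegree_qLinearized hq (by simp [hb'])]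
  exact hlt.not_ge (pow_finrank_le_natDegree W (sub_ne_zero.mpr hne) fun x hx => by
    rw [eval_sub, h x hx, h' x hx, sub_zero])

theorem exists_qLinearized_aeval_eq_zero_of_forall_algEquiv_mem {F : Type*} [Field F]
    [Algebra F E] [FiniteDimensional F E] [IsGalois F E] (W : Submodule Fq E) (hW : W.FG)
    (hσW : ∀ σ : Gal(E/F), ∀ x ∈ W, σ x ∈ W) :
    ∃ c : ℕ → F, c (Module.finrank Fq W) = 1 ∧
      ∀ x ∈ W, aeval x (qLinearized q (Module.finrank Fq W) c) = 0 := by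
  have hq : 1 < q := Fintype.one_lt_card
  set n := Module.finrank Fq W
  obtain ⟨b, hb, hbW⟩ := exists_monic_qLinearized_eval_eq_zero W hW
  have hfixed (σ : Gal(E/F)) {i : ℕ} (hi : i ≤ n) : σ (b i) = b i := by
    have hσ : qLinearized q n (σ ∘ b) = qLinearized q n b := by
      refine qLinearized_eq_of_eval_eq_zero W (by simp [hb]) hb (fun x hx => ?_) hbW
      have := congrArg σ (hbW (σ.symm x) (hσW σ.symm x hx))
      simpa [eval_qLinearized] using this
    simpa [coeff_qLinearized_pow hq hi] using congrArg (coeff · (q ^ i)) hσ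
  have hdescend (i : ℕ) : ∃ y : F, i ≤ n → algebraMap F E y = b i := by
    by_cases hi : i ≤ n
    · obtain ⟨y, hy⟩ := (IsGalois.mem_range_algebraMap_iff_fixed (b i)).mpr fun σ => hfixed σ hi
      exact ⟨y, fun _ => hy⟩
    · exact ⟨0, fun h => absurd h hi⟩
  choose c hc using hdescend
  refine ⟨c, (algebraMap F E).injective (by rw [hc n le_rfl, hb, map_one]), fun x hx => ?_⟩
  rw [← eval_map_algebraMap, map_qLinearized, qLinearized_congr (b := algebraMap F E ∘ c) hc]
  exact hbW x hx

end FiniteField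

theorem algEquiv_mem_span_rootSet {Fq F E : Type*} [Field Fq] [Field F] [Field E] [Algebra F E]
    [Algebra Fq F] [Algebra Fq E] [IsScalarTower Fq F E] (f : F[X]) (σ : E ≃ₐ[F] E) {x : E}
    (hx : x ∈ Submodule.span Fq (f.rootSet E)) : σ x ∈ Submodule.span Fq (f.rootSet E) :=
  Submodule.span_mono (Set.image_subset_iff.mpr (rootSet_mapsTo (σ : E →ₐ[F] E)))
    (Submodule.apply_mem_span_image_of_mem_span
      ((σ : E →ₐ[F] E).restrictScalars Fq).toLinearMap hx)

theorem Polynomial.Separable.dvd_of_aeval_eq_zero {F E : Type*} [Field F] [Field E] [Algebra F E]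
    {f P : F[X]} (hf : f.Separable) (hs : (f.map (algebraMap F E)).Splits) (hP : P ≠ 0)
    (h : ∀ x ∈ f.rootSet E, aeval x P = 0) : f ∣ P := by
  rw [← map_dvd_map' (algebraMap F E)]
  refine hs.dvd_of_roots_le_roots (map_ne_zero hf.ne_zero) ?_
  rw [Multiset.le_iff_subset (nodup_roots hf.map)]
  intro x hx
  rw [mem_roots (map_ne_zero hP), IsRoot, eval_map_algebraMap]
  exact h x (by simpa [rootSet, aroots] using hx)

theorem stmt_4_general (q : ℕ)
    (Fq F E : Type) [Field Fq] [Fintype Fq] (hFq : Fintype.card Fq = q)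
    [Field F] [Algebra Fq F] [Field E] [Algebra F E] [Algebra Fq E]
    [IsScalarTower Fq F E]
    (f : F[X]) (hf : f.Separable)
    (hsplit : f.IsSplittingField F E) :
    IsLeast {d : ℕ | ∃ b : ℕ → F, b d ≠ 0 ∧
        f ∣ ∑ i ∈ Finset.range (d + 1), C (b i) * X ^ q ^ i}
      (Module.finrank Fq (Submodule.span Fq (f.rootSet E))) := by
  subst hFq
  have : FiniteDimensional F E := hsplit.finiteDimensional E f
  have : IsGalois F E := IsGalois.of_separable_splitting_field hf
  have hq : 1 < Fintype.card Fq := Fintype.one_lt_card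
  set V := Submodule.span Fq (f.rootSet E)
  constructor
  · obtain ⟨c, hc, hcV⟩ := exists_qLinearized_aeval_eq_zero_of_forall_algEquiv_mem V
      (Submodule.fg_span (f.rootSet_finite E)) fun σ x hx => algEquiv_mem_span_rootSet f σ hx
    refine ⟨c, by simp [hc], hf.dvd_of_aeval_eq_zero hsplit.splits'
      (qLinearized_ne_zero hq (by simp [hc])) fun x hx => hcV x (Submodule.subset_span hx)⟩
  · rintro d ⟨c, hc, g, hg⟩
    refine finrank_le_of_forall_eval_qLinearized_eq_zero V (b := algebraMap F E ∘ c)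
      (by simpa using hc) fun x hx => eval_qLinearized_eq_zero_of_mem_span (fun β hβ => ?_) hx
    rw [← map_qLinearized, eval_map_algebraMap, qLinearized, hg, aeval_mul,
      aeval_eq_zero_of_mem_rootSet hβ, zero_mul]

/-- The minimal q-degree of a nonzero q-linearized polynomial divisible by a
separable polynomial `f` equals the `F_q`-dimension of the span of the roots of `f` in a
splitting field. -/
theorem stmt_4 (p a q : ℕ) [Fact p.Prime] (ha : 0 < a) (hq : q = p ^ a)
    (Fq F E : Type) [Field Fq] [Fintype Fq] (hFq : Fintype.card Fq = q)
    [Field F] [CharP F p] [Algebra Fq F] [Field E] [Algebra F E] [Algebra Fq E]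
    [IsScalarTower Fq F E]
    (f : F[X]) (hf : f.Separable) (hf0 : f ≠ 0)
    (hsplit : f.IsSplittingField F E) :
    IsLeast {d : ℕ | ∃ b : ℕ → F, b d ≠ 0 ∧
        f ∣ ∑ i ∈ Finset.range (d + 1), C (b i) * X ^ q ^ i}
      (Module.finrank Fq (Submodule.span Fq (f.rootSet E))) :=
  stmt_4_general q Fq F E hFq f hf hsplit
end

section
/- Let L be a p-linearized polynomial of p-degree n over a field F of characteristic p, with distinct roots, splitting field E, and root space V_L with basis α_1, ..., α_n. Let P be defined by L(x)/x = P(x^{p−1}), and let L_P be the q-linearized polynomial of minimal degree divisible by P. Then for all nonnegative integers k_1, ..., k_n with k_1 + ... + k_n = p − 1, the monomial α_1^{k_1} α_2^{k_2} ⋯ α_n^{k_n} is a root of L_P. -/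
open Polynomial

namespace Stmt8Aux
open Finset
open Finset

lemma zmod_sum_pow_lt (p : ℕ) [Fact p.Prime] (m : ℕ) (h : m < p - 1) :
    ∑ x : ZMod p, x ^ m = 0 :=
  FiniteField.sum_pow_lt_card_sub_one (ZMod p) m (by rwa [ZMod.card])

lemma zmod_sum_pow_card_sub_one (p : ℕ) [Fact p.Prime] :
    ∑ x : ZMod p, x ^ (p - 1) = -1 := by
  have h1 : ∀ x : ZMod p, x ^ (p - 1) = 1 - (if x = 0 then 1 else 0) := by
    intro x
    by_cases hx : x = 0
    · simp [hx, zero_pow, Nat.sub_ne_zero_of_lt (Fact.out : p.Prime).one_lt]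
    · simp [hx, ZMod.pow_card_sub_one_eq_one hx]
  calc ∑ x : ZMod p, x ^ (p - 1) = ∑ x : ZMod p, (1 - if x = 0 then 1 else 0) := by
        simp only [h1]
    _ = (Fintype.card (ZMod p) : ZMod p) - 1 := by
        rw [Finset.sum_sub_distrib, Finset.sum_const,
          Finset.sum_ite_eq' Finset.univ (0 : ZMod p) (fun _ => (1:ZMod p))]
        simp [Finset.card_univ]
    _ = -1 := by rw [ZMod.card, ZMod.natCast_self, zero_sub]

lemma zmod_inner_sum (p : ℕ) [Fact p.Prime] (n : ℕ) (k k' : Fin n → ℕ)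
    (hk : ∑ i, k i = p - 1) (hk' : ∑ i, k' i = p - 1) :
    ∑ i : Fin n → ZMod p, ∏ j, (i j) ^ (p - 1 - k j + k' j)
      = if k' = k then (-1 : ZMod p) ^ n else 0 := by
  have hkle : ∀ j, k j ≤ p - 1 := fun j => hk ▸ Finset.single_le_sum (fun _ _ => Nat.zero_le _) (mem_univ j)
  have factor : (∏ j : Fin n, ∑ t : ZMod p, t ^ (p - 1 - k j + k' j))
      = ∑ i : Fin n → ZMod p, ∏ j, (i j) ^ (p - 1 - k j + k' j) := by
    rw [Finset.prod_univ_sum, Fintype.piFinset_univ]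
  rw [← factor]
  by_cases h : k' = k
  · subst h
    rw [if_pos rfl]
    have : ∀ j : Fin n, p - 1 - k' j + k' j = p - 1 := fun j => Nat.sub_add_cancel (hkle j)
    simp only [this, zmod_sum_pow_card_sub_one p]
    simp
  · rw [if_neg h]
    have : ∃ j, k' j < k j := by
      by_contra hc
      push_neg at hc
      apply h
      funext j
      by_contra hj
      have : ∑ i, k i < ∑ i, k' i :=
        Finset.sum_lt_sum (fun i _ => hc i) ⟨j, mem_univ j, lt_of_le_of_ne (hc j) (Ne.symm hj)⟩
      omega
    obtain ⟨j, hj⟩ := this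
    apply Finset.prod_eq_zero (mem_univ j)
    exact zmod_sum_pow_lt p _ (by have := hkle j; omega)

lemma key_identity (p : ℕ) [Fact p.Prime] (E : Type) [CommRing E] [Algebra (ZMod p) E]
    (n : ℕ) (α : Fin n → E) (k : Fin n → ℕ) (hk : ∑ i, k i = p - 1) :
    ∑ i : Fin n → ZMod p, algebraMap (ZMod p) E (∏ j, (i j) ^ (p - 1 - k j))
        * (∑ j, algebraMap (ZMod p) E (i j) * α j) ^ (p - 1)
      = algebraMap (ZMod p) E ((-1) ^ n * (Nat.multinomial Finset.univ k : ZMod p))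
        * ∏ j, α j ^ k j := by
  classical
  have expand : ∀ i : Fin n → ZMod p,
      (∑ j, algebraMap (ZMod p) E (i j) * α j) ^ (p - 1)
      = ∑ k' ∈ piAntidiag univ (p-1), (Nat.multinomial univ k' : E) *
          (algebraMap (ZMod p) E (∏ j, (i j) ^ (k' j)) * ∏ j, α j ^ (k' j)) := by
    intro i
    rw [Finset.sum_pow_eq_sum_piAntidiag]
    refine Finset.sum_congr rfl fun k' _ => ?_
    rw [map_prod]
    simp only [mul_pow, map_pow]
    rw [← Finset.prod_mul_distrib]
  calc ∑ i : Fin n → ZMod p, algebraMap (ZMod p) E (∏ j, (i j) ^ (p - 1 - k j))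
        * (∑ j, algebraMap (ZMod p) E (i j) * α j) ^ (p - 1)
      = ∑ k' ∈ piAntidiag univ (p-1), (Nat.multinomial univ k' : E) *
          (algebraMap (ZMod p) E (∑ i : Fin n → ZMod p, ∏ j, (i j) ^ (p - 1 - k j + k' j))
            * ∏ j, α j ^ (k' j)) := by
        simp only [expand, Finset.mul_sum]
        rw [Finset.sum_comm]
        refine Finset.sum_congr rfl fun k' _ => ?_
        rw [map_sum, Finset.sum_mul, Finset.mul_sum]
        refine Finset.sum_congr rfl fun i _ => ?_
        have hA : algebraMap (ZMod p) E (∏ j, (i j) ^ (p - 1 - k j))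
            * algebraMap (ZMod p) E (∏ j, (i j) ^ (k' j))
            = algebraMap (ZMod p) E (∏ j, (i j) ^ (p - 1 - k j + k' j)) := by
          rw [← map_mul, ← Finset.prod_mul_distrib]
          simp only [← pow_add]
        rw [← hA]
        ring
    _ = algebraMap (ZMod p) E ((-1) ^ n * (Nat.multinomial Finset.univ k : ZMod p))
        * ∏ j, α j ^ k j := by
        rw [Finset.sum_eq_single k]
        · rw [zmod_inner_sum p n k k hk hk, if_pos rfl]
          rw [map_mul, map_pow, map_neg, map_one, map_natCast]
          ring
        · intro k' hk' hne
          rw [zmod_inner_sum p n k k' hk (by simpa using (Finset.mem_piAntidiag.mp hk').1),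
            if_neg hne]
          simp
        · intro hkk
          exact absurd (Finset.mem_piAntidiag.mpr ⟨by simpa using hk, fun i _ => mem_univ i⟩) hkk
end Stmt8Aux

/-- With `L` a p-linearized polynomial of p-degree `n` with distinct roots,
`P` its projective polynomial, `L_P` the p-linearized polynomial of minimal p-degree
divisible by `P`, and `α_1, ..., α_n` a basis of the root space of `L`, every monomial
`α_1^{k_1} ⋯ α_n^{k_n}` of total degree `p - 1` is a root of `L_P`. -/
theorem stmt_8 (p : ℕ) [Fact p.Prime]
    (F E : Type) [Field F] [CharP F p] [Field E] [Algebra F E] [Algebra (ZMod p) E]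
    (n : ℕ) (c : ℕ → F) (h0 : c 0 ≠ 0) (hn : c n ≠ 0)
    (L : F[X]) (hL : L = ∑ i ∈ Finset.range (n + 1), C (c i) * X ^ p ^ i)
    (hsq : Squarefree L)
    (hsplit : L.IsSplittingField F E)
    (α : Fin n → E) (hroots : ∀ i, aeval (α i) L = 0)
    (hli : LinearIndependent (ZMod p) α)
    (hspan : (Submodule.span (ZMod p) (Set.range α) : Set E) = {x : E | aeval x L = 0})
    (P : F[X]) (hP : L = X * P.comp (X ^ (p - 1)))
    (d : ℕ) (b : ℕ → F) (hb : b d ≠ 0)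
    (LP : F[X]) (hLP : LP = ∑ i ∈ Finset.range (d + 1), C (b i) * X ^ p ^ i)
    (hdvd : P ∣ LP)
    (hmin : ∀ (d' : ℕ) (b' : ℕ → F), b' d' ≠ 0 →
      P ∣ ∑ i ∈ Finset.range (d' + 1), C (b' i) * X ^ p ^ i → d ≤ d')
    (k : Fin n → ℕ) (hk : ∑ i, k i = p - 1) :
    aeval (∏ i, α i ^ k i) LP = 0 := by
  classical
  have hp : p.Prime := Fact.out
  have hE : CharP E p := charP_of_injective_algebraMap (algebraMap F E).injective p
  set A := algebraMap (ZMod p) E with hA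
  -- the evaluation map of LP is additive, ZMod p "linear", and kills 0
  have hfadd : ∀ x y : E, aeval (x + y) LP = aeval x LP + aeval y LP := by
    intro x y
    simp only [hLP, map_sum, map_mul, aeval_C, aeval_X_pow]
    rw [← Finset.sum_add_distrib]
    refine Finset.sum_congr rfl fun i _ => ?_
    rw [add_pow_char_pow, mul_add]
  have hfA : ∀ (t : ZMod p) (x : E), aeval (A t * x) LP = A t * aeval x LP := by
    intro t x
    simp only [hLP, map_sum, map_mul, aeval_C, aeval_X_pow, Finset.mul_sum]
    refine Finset.sum_congr rfl fun i _ => ?_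
    rw [mul_pow, ← map_pow, ZMod.pow_card_pow]
    ring
  have hf0 : aeval (0 : E) LP = 0 := by
    simp only [hLP, map_sum, map_mul, aeval_C, aeval_X_pow]
    refine Finset.sum_eq_zero fun i _ => ?_
    rw [zero_pow (pow_ne_zero i hp.ne_zero), mul_zero]
  -- any root of L, raised to the (p-1)-st power, is a root of LP
  have hroot : ∀ v : E, aeval v L = 0 → aeval (v ^ (p - 1)) LP = 0 := by
    intro v hv
    rw [hP, map_mul, aeval_X, aeval_comp, map_pow, aeval_X] at hv
    rcases mul_eq_zero.mp hv with h | h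
    · rw [h, zero_pow (Nat.sub_ne_zero_of_lt hp.one_lt)]
      exact hf0
    · obtain ⟨Q, hQ⟩ := hdvd
      rw [hQ, map_mul, h, zero_mul]
  -- every (ZMod p)-combination of the α's is a root of L
  have hVroot : ∀ i : Fin n → ZMod p, aeval (∑ j, A (i j) * α j) L = 0 := by
    intro i
    have hmem : (∑ j, A (i j) * α j) ∈ Submodule.span (ZMod p) (Set.range α) := by
      refine Submodule.sum_mem _ fun j _ => ?_
      rw [← Algebra.smul_def]
      exact Submodule.smul_mem _ _ (Submodule.subset_span ⟨j, rfl⟩)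
    have : (∑ j, A (i j) * α j) ∈ {x : E | aeval x L = 0} := hspan ▸ hmem
    exact this
  -- apply the evaluation of LP to the key identity
  have key := Stmt8Aux.key_identity p E n α k hk
  have hsum0 : aeval (∑ i : Fin n → ZMod p,
      A (∏ j, (i j) ^ (p - 1 - k j)) * (∑ j, A (i j) * α j) ^ (p - 1)) LP = 0 := by
    let φ : E →+ E := AddMonoidHom.mk' (fun x => aeval x LP) hfadd
    show φ _ = 0
    rw [map_sum]
    refine Finset.sum_eq_zero fun i _ => ?_
    show aeval _ LP = 0
    rw [hfA, hroot _ (hVroot i), mul_zero]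
  rw [key, hfA] at hsum0
  -- the constant is nonzero
  have hCne : ((-1 : ZMod p) ^ n * (Nat.multinomial Finset.univ k : ZMod p)) ≠ 0 := by
    apply mul_ne_zero
    · exact pow_ne_zero n (by simp)
    · rw [Ne, ZMod.natCast_eq_zero_iff]
      intro hdvd'
      have h1 : p ∣ (∑ i, k i).factorial := by
        rw [← Nat.multinomial_spec]
        exact hdvd'.mul_left _
      rw [hk] at h1
      have h2 := (Nat.Prime.dvd_factorial hp).mp h1
      have h3 := hp.one_lt
      omega
  have hAne : A ((-1 : ZMod p) ^ n * (Nat.multinomial Finset.univ k : ZMod p)) ≠ 0 := by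
    intro h
    exact hCne ((map_eq_zero_iff A (algebraMap (ZMod p) E).injective).mp h)
  rcases mul_eq_zero.mp hsum0 with h | h
  · exact absurd h hAne
  · exact h
end

section
/- Let p be a prime and n ≥ 1. Every monomial α_1^{k_1} ⋯ α_n^{k_n} of total degree p − 1 in elements α_1, ..., α_n of a field of characteristic p lies in the F_p-span of the set of (p−1)-th powers {(i_1 α_1 + ... + i_n α_n)^{p−1} : i_1, ..., i_n ∈ F_p}. -/
open Polynomial

/-- In a field of characteristic `p`, every monomial `α_1^{k_1} ⋯ α_n^{k_n}`
of total degree `p - 1` lies in the `F_p`-span of the `(p-1)`-th powers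
`(i_1 α_1 + ⋯ + i_n α_n)^{p-1}` with `i_j ∈ F_p`. -/
theorem stmt_9 (p : ℕ) [Fact p.Prime] (n : ℕ) (hn : 1 ≤ n)
    (E : Type) [Field E] [CharP E p] [Algebra (ZMod p) E]
    (α : Fin n → E) (k : Fin n → ℕ) (hk : ∑ i, k i = p - 1) :
    (∏ i, α i ^ k i) ∈ Submodule.span (ZMod p)
      {x : E | ∃ c : Fin n → ZMod p, x = (∑ i, c i • α i) ^ (p - 1)} := by
  classical
  have hp : p.Prime := Fact.out
  set φ : ZMod p →+* E := algebraMap (ZMod p) E with hφ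
  -- power sums over ZMod p
  have hsum0 : ∀ e : ℕ, e < p - 1 → ∑ x : ZMod p, x ^ e = 0 := fun e he =>
    FiniteField.sum_pow_lt_card_sub_one (K := ZMod p) e (by rwa [ZMod.card])
  have hsum1 : ∑ x : ZMod p, x ^ (p - 1) = -1 := by
    have h1 : ∀ x : ZMod p, x ^ (p - 1) = if x = 0 then 0 else 1 := by
      intro x
      split_ifs with h
      · simp [h, zero_pow, Nat.sub_ne_zero_of_lt hp.one_lt]
      · exact ZMod.pow_card_sub_one_eq_one h
    rw [Finset.sum_congr rfl fun x _ => h1 x, Finset.sum_ite, Finset.sum_const, Finset.sum_const]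
    have hc : (Finset.univ.filter (fun x : ZMod p => ¬ x = 0)).card = p - 1 := by
      rw [Finset.filter_not, Finset.card_sdiff_of_subset (Finset.filter_subset _ _)]
      simp [Finset.filter_eq', ZMod.card]
    rw [hc]
    simp only [smul_zero, zero_add, nsmul_eq_mul, mul_one]
    rw [Nat.cast_sub hp.one_le, ZMod.natCast_self, Nat.cast_one]
    ring
  -- the multinomial coefficient is nonzero mod p
  have hNk : (Nat.multinomial Finset.univ k : ZMod p) ≠ 0 := by
    rw [Ne, ZMod.natCast_eq_zero_iff]
    intro hdvd
    have hd : p ∣ Nat.factorial (p - 1) := by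
      rw [← hk, ← Nat.multinomial_spec]
      exact hdvd.mul_left _
    have h2 := (Nat.Prime.dvd_factorial hp).mp hd
    have := hp.two_le
    omega
  -- the auxiliary combination
  set T : E := ∑ c : Fin n → ZMod p,
      (∏ i, c i ^ (p - 1 - k i)) • ((∑ i, c i • α i) ^ (p - 1)) with hT
  have hTmem : T ∈ Submodule.span (ZMod p)
      {x : E | ∃ c : Fin n → ZMod p, x = (∑ i, c i • α i) ^ (p - 1)} := by
    refine Submodule.sum_mem _ fun c _ => ?_
    exact Submodule.smul_mem _ _ (Submodule.subset_span ⟨c, rfl⟩)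
  -- compute T
  have key : ∀ m ∈ Finset.piAntidiag Finset.univ (p - 1),
      (∑ c : Fin n → ZMod p, ∏ i, c i ^ (p - 1 - k i + m i))
        = if m = k then (-1 : ZMod p) ^ n else 0 := by
    intro m hm
    rw [Finset.mem_piAntidiag] at hm
    have hmsum : ∑ i, m i = p - 1 := hm.1
    have hkle : ∀ i, k i ≤ p - 1 := fun i => by
      rw [← hk]
      exact Finset.single_le_sum (fun j _ => Nat.zero_le _) (Finset.mem_univ i)
    have hswap : (∑ c : Fin n → ZMod p, ∏ i, c i ^ (p - 1 - k i + m i))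
        = ∏ i, ∑ x : ZMod p, x ^ (p - 1 - k i + m i) := by
      rw [← Fintype.piFinset_univ]
      exact Finset.sum_prod_piFinset Finset.univ fun i x => x ^ (p - 1 - k i + m i)
    rw [hswap]
    by_cases hmk : m = k
    · rw [if_pos hmk]
      have hmk' : ∀ i, m i = k i := fun i => congrFun hmk i
      rw [Finset.prod_congr rfl fun i (_ : i ∈ Finset.univ) => by
        rw [show p - 1 - k i + m i = p - 1 by have h1 := hkle i; have h2 := hmk' i; omega, hsum1]]
      simp
    · rw [if_neg hmk]
      have : ∃ i, m i < k i := by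
        by_contra hcon
        push_neg at hcon
        exact hmk (funext fun i => le_antisymm
          ((Finset.sum_eq_sum_iff_of_le (fun i _ => hcon i)).mp
            (by rw [hk, hmsum]) i (Finset.mem_univ i)).ge (hcon i))
      obtain ⟨i, hi⟩ := this
      refine Finset.prod_eq_zero (Finset.mem_univ i) ?_
      exact hsum0 _ (by have := hkle i; omega)
  have hkmem : k ∈ Finset.piAntidiag (Finset.univ : Finset (Fin n)) (p - 1) := by
    rw [Finset.mem_piAntidiag]
    exact ⟨hk, fun i _ => Finset.mem_univ i⟩
  have hTeq : T = ((Nat.multinomial Finset.univ k : ZMod p) * (-1) ^ n) • ∏ i, α i ^ k i := by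
    calc T = ∑ c : Fin n → ZMod p, ∑ m ∈ Finset.piAntidiag Finset.univ (p - 1),
            ((Nat.multinomial Finset.univ m : ZMod p) * ∏ i, c i ^ (p - 1 - k i + m i))
              • ∏ i, α i ^ m i := by
          refine Finset.sum_congr rfl fun c _ => ?_
          rw [Finset.sum_pow_eq_sum_piAntidiag, Finset.smul_sum]
          refine Finset.sum_congr rfl fun m _ => ?_
          simp only [Algebra.smul_def, map_mul, map_natCast, map_prod, map_pow, pow_add,
            mul_pow, Finset.prod_mul_distrib]
          ring
      _ = ∑ m ∈ Finset.piAntidiag Finset.univ (p - 1),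
            ((Nat.multinomial Finset.univ m : ZMod p)
              * ∑ c : Fin n → ZMod p, ∏ i, c i ^ (p - 1 - k i + m i)) • ∏ i, α i ^ m i := by
          rw [Finset.sum_comm]
          refine Finset.sum_congr rfl fun m _ => ?_
          rw [Finset.mul_sum, Finset.sum_smul]
      _ = _ := by
          rw [Finset.sum_congr rfl fun m hm => by rw [key m hm]]
          simp only [mul_ite, mul_zero, ite_smul, zero_smul]
          rw [Finset.sum_ite_eq' _ k fun m =>
            ((Nat.multinomial Finset.univ m : ZMod p) * (-1) ^ n) • ∏ i, α i ^ m i]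
          rw [if_pos hkmem]
  have hN : ((Nat.multinomial Finset.univ k : ZMod p) * (-1) ^ n) ≠ 0 :=
    mul_ne_zero hNk (pow_ne_zero _ (neg_ne_zero.mpr one_ne_zero))
  have hfin := Submodule.smul_mem _ ((Nat.multinomial Finset.univ k : ZMod p) * (-1) ^ n)⁻¹ hTmem
  rw [hTeq, smul_smul, inv_mul_cancel₀ hN, one_smul] at hfin
  exact hfin
end

section
/- Let L be a q-linearized polynomial over F_q of q-degree n such that L(x)/x is irreducible in F_q[x], and let α ≠ 0 be a root of L in a splitting field over F_q. Then α, α^q, α^{q^2}, ..., α^{q^{n−1}} are linearly independent over F_q and form a basis of the F_q-space of roots of L. -/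
open Polynomial

/-- Coefficient of a q-linearized polynomial at `q ^ j`. -/
lemma aux_coeff {Fq : Type} [Field Fq] {q : ℕ} (hq2 : 2 ≤ q) (s : Finset ℕ) (lam : ℕ → Fq)
    {j : ℕ} (hj : j ∈ s) :
    (∑ i ∈ s, C (lam i) * X ^ q ^ i).coeff (q ^ j) = lam j := by
  rw [finset_sum_coeff]
  rw [Finset.sum_eq_single j]
  · simp [coeff_C_mul, coeff_X_pow]
  · intro i hi hij
    have : q ^ j ≠ q ^ i := fun h => hij (Nat.pow_right_injective hq2 h.symm)
    simp [coeff_C_mul, coeff_X_pow, this]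
  · intro h; exact absurd hj h

/-- If `L ∈ F_q[x]` is q-linearized of q-degree `n` with `L(x)/x`
irreducible, and `α ≠ 0` is a root in a splitting field, then `α, α^q, ..., α^{q^{n-1}}`
are linearly independent over `F_q` and form a basis of the space of roots of `L`. -/
theorem stmt_10 (p a q n : ℕ) [Fact p.Prime] (ha : 0 < a) (hq : q = p ^ a)
    (Fq E : Type) [Field Fq] [Fintype Fq] (hFq : Fintype.card Fq = q)
    [Field E] [Algebra Fq E]
    (c : ℕ → Fq) (hn : c n ≠ 0)
    (L : Polynomial Fq) (hL : L = ∑ i ∈ Finset.range (n + 1), C (c i) * X ^ q ^ i)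
    (M : Polynomial Fq) (hM : L = X * M) (hirr : Irreducible M)
    (hsplit : L.IsSplittingField Fq E)
    (α : E) (hα : α ≠ 0) (hroot : aeval α L = 0) :
    LinearIndependent Fq (fun i : Fin n => α ^ q ^ (i : ℕ)) ∧
    (Submodule.span Fq (Set.range fun i : Fin n => α ^ q ^ (i : ℕ)) : Set E) =
      {x : E | aeval x L = 0} := by
  have hp : p.Prime := Fact.out
  have hq2 : 2 ≤ q := by
    rw [hq]; calc 2 ≤ p := hp.two_le
    _ ≤ p ^ a := Nat.le_self_pow ha.ne' p
  have hinj : Function.Injective (algebraMap Fq E) := (algebraMap Fq E).injective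
  -- characteristic
  have hcharFq : CharP Fq p := by
    obtain ⟨r, hr⟩ := CharP.exists Fq
    haveI := hr
    obtain ⟨m, hrp, hcard⟩ := FiniteField.card Fq r
    have : p = r := by
      have hdvd : p ∣ r ^ (m : ℕ) := by
        rw [← hcard, hFq, hq]; exact dvd_pow_self p ha.ne'
      exact ((Nat.prime_dvd_prime_iff_eq hp hrp).mp (hp.dvd_of_dvd_pow hdvd))
    rwa [this]
  haveI := hcharFq
  haveI hcharE : CharP E p := charP_of_injective_algebraMap (algebraMap Fq E).injective p
  -- Frobenius facts
  have hfq : ∀ (x : Fq) (i : ℕ), x ^ q ^ i = x := by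
    intro x i; rw [← hFq]; exact FiniteField.pow_card_pow i x
  have hadd : ∀ (i : ℕ) (x y : E), (x + y) ^ q ^ i = x ^ q ^ i + y ^ q ^ i := by
    intro i x y; rw [hq, ← pow_mul]; exact add_pow_char_pow x y p (a * i)
  have haev : ∀ x : E, aeval x L = ∑ i ∈ Finset.range (n + 1),
      algebraMap Fq E (c i) * x ^ q ^ i := by
    intro x; rw [hL]; simp [map_sum]
  have hamq : ∀ (x : Fq) (i : ℕ), (algebraMap Fq E x) ^ q ^ i = algebraMap Fq E x := by
    intro x i; rw [← map_pow, hfq]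
  -- the evaluation map is Fq-linear
  set φ : E →ₗ[Fq] E :=
    { toFun := fun x => aeval x L
      map_add' := fun x y => by
        simp only [haev, ← Finset.sum_add_distrib]
        exact Finset.sum_congr rfl fun i _ => by rw [hadd, mul_add]
      map_smul' := fun m x => by
        simp only [haev, RingHom.id_apply, Algebra.smul_def, Finset.mul_sum]
        refine Finset.sum_congr rfl fun i _ => ?_
        rw [mul_pow, hamq]; ring } with hφ
  have hφev : ∀ x : E, φ x = aeval x L := fun _ => rfl
  -- evaluating at x^{q^i}
  have hfrob : ∀ (i : ℕ) (x : E), aeval (x ^ q ^ i) L = (aeval x L) ^ q ^ i := by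
    intro i x
    have hqi : (q : ℕ) ^ i = p ^ (a * i) := by rw [hq, ← pow_mul]
    rw [haev, haev]
    symm
    calc (∑ j ∈ Finset.range (n + 1), algebraMap Fq E (c j) * x ^ q ^ j) ^ q ^ i
        = iterateFrobenius E p (a * i)
            (∑ j ∈ Finset.range (n + 1), algebraMap Fq E (c j) * x ^ q ^ j) := by
          rw [iterateFrobenius_def, ← hqi]
      _ = ∑ j ∈ Finset.range (n + 1),
            iterateFrobenius E p (a * i) (algebraMap Fq E (c j) * x ^ q ^ j) := map_sum _ _ _
      _ = ∑ j ∈ Finset.range (n + 1), algebraMap Fq E (c j) * (x ^ q ^ i) ^ q ^ j := by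
          refine Finset.sum_congr rfl fun j _ => ?_
          rw [iterateFrobenius_def, ← hqi, mul_pow, hamq, ← pow_mul, ← pow_mul,
            mul_comm (q ^ j)]
  have hrootpow : ∀ i : ℕ, aeval (α ^ q ^ i) L = 0 := by
    intro i
    rw [hfrob, hroot]
    exact zero_pow (Nat.pos_of_ne_zero (by positivity)).ne'
  -- degree of L
  have hcoeffL : L.coeff (q ^ n) = c n := by
    rw [hL]; exact aux_coeff hq2 _ _ (Finset.self_mem_range_succ n)
  have hLne : L ≠ 0 := fun h => hn (by rw [← hcoeffL, h, coeff_zero])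
  have hLdeg : L.natDegree = q ^ n := by
    refine le_antisymm ?_ (le_natDegree_of_ne_zero (by rw [hcoeffL]; exact hn))
    rw [hL]
    refine natDegree_sum_le_of_forall_le _ _ fun i hi => ?_
    refine (natDegree_C_mul_le _ _).trans ?_
    rw [natDegree_X_pow]
    exact Nat.pow_le_pow_right (by omega) (Finset.mem_range_succ_iff.mp hi)
  -- n ≥ 1
  have hn1 : 1 ≤ n := by
    by_contra h
    have hn0 : n = 0 := by omega
    subst hn0
    have := haev α
    simp only [zero_add, Finset.sum_range_one, pow_zero, pow_one] at this
    rw [hroot] at this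
    rcases mul_eq_zero.mp this.symm with h1 | h1
    · exact hn (hinj (by simpa using h1))
    · exact hα h1
  have hMne : M ≠ 0 := fun h => hLne (by rw [hM, h, mul_zero])
  have hMdeg : M.natDegree = q ^ n - 1 := by
    have : L.natDegree = 1 + M.natDegree := by
      rw [hM, natDegree_mul X_ne_zero hMne, natDegree_X]
    omega
  -- c 0 ≠ 0
  have hc0 : c 0 ≠ 0 := by
    intro h0
    have hcoeff1 : L.coeff 1 = 0 := by
      have := aux_coeff (Fq := Fq) hq2 (Finset.range (n+1)) c
        (j := 0) (by simp)
      rw [← hL] at this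
      rwa [pow_zero, h0] at this
    have hXc : M.coeff 0 = 0 := by
      have h := coeff_X_mul M 0
      rw [← hM] at h
      rw [← h]; exact hcoeff1
    obtain ⟨t, ht⟩ := X_dvd_iff.mpr hXc
    rcases hirr.isUnit_or_isUnit ht with hu | hu
    · exact Polynomial.not_isUnit_X hu
    · have htne : t ≠ 0 := hu.ne_zero
      have hM1 : M.natDegree = 1 := by
        rw [ht, natDegree_mul X_ne_zero htne, natDegree_X, natDegree_eq_zero_of_isUnit hu]
      have hqn2 : q ^ n ≥ 2 := le_trans hq2 (Nat.le_self_pow (by omega) q)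
      have h2 : q ^ n = 2 := by omega
      have hqe : q = 2 := by
        have : q ≤ q ^ n := Nat.le_self_pow (by omega) q
        omega
      have hne1 : n = 1 := by
        have hqq : q ^ n = q ^ 1 := by rw [pow_one, h2, hqe]
        exact Nat.pow_right_injective hq2 hqq
      subst hne1
      have := haev α
      rw [hroot] at this
      simp only [Finset.sum_range_succ, Finset.range_one, Finset.sum_singleton, pow_zero,
        pow_one, h0, map_zero, zero_mul, zero_add] at this
      rcases mul_eq_zero.mp this.symm with h1 | h1
      · exact hn (hinj (by simpa using h1))
      · exact hα (pow_eq_zero_iff (by omega) |>.mp h1)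
  -- separability and finiteness
  have hderiv : derivative L = C (c 0) := by
    rw [hL, derivative_sum]
    rw [Finset.sum_eq_single 0]
    · norm_num [derivative_C_mul_X_pow]
    · intro i hi hi0
      rw [derivative_C_mul_X_pow]
      have : ((q : Fq) ^ i) = 0 := by
        have hpq : (p : ℕ) ∣ q ^ i := dvd_pow (by rw [hq]; exact dvd_pow_self p ha.ne') hi0
        have := (CharP.cast_eq_zero_iff Fq p (q ^ i)).mpr hpq
        rwa [Nat.cast_pow] at this
      rw [Nat.cast_pow, this, mul_zero, map_zero, zero_mul]
    · simp [hn1]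
  have hsep : L.Separable := by
    rw [Polynomial.separable_def, hderiv]
    exact ⟨0, C (c 0)⁻¹, by rw [zero_mul, zero_add, ← C_mul, inv_mul_cancel₀ hc0, C_1]⟩
  haveI := hsplit
  haveI : FiniteDimensional Fq E := Polynomial.IsSplittingField.finiteDimensional E L
  haveI : Finite E := Module.finite_of_finite Fq
  have hVcard : Nat.card {x : E | aeval x L = 0} = q ^ n := by
    have hset : {x : E | aeval x L = 0} = L.rootSet E := by
      ext x; simp [mem_rootSet, hLne]
    rw [hset, Nat.card_eq_fintype_card, card_rootSet_eq_natDegree hsep hsplit.splits, hLdeg]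
  -- minpoly facts
  have hint : IsIntegral Fq α := IsIntegral.of_finite Fq α
  have hMα : aeval α M = 0 := by
    have h0 : aeval α L = α * aeval α M := by rw [hM, map_mul, aeval_X]
    rcases mul_eq_zero.mp (h0 ▸ hroot : α * aeval α M = 0) with h | h
    · exact absurd h hα
    · exact h
  set P := minpoly Fq α with hP
  have hPirr : Irreducible P := minpoly.irreducible hint
  have hPM : P ∣ M := minpoly.dvd Fq α hMα
  have hPdeg : P.natDegree = q ^ n - 1 := by
    rw [natDegree_eq_of_degree_eq (degree_eq_degree_of_associated
      (hPirr.associated_of_dvd hirr hPM)), hMdeg]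
  have hPX : ¬ (P ∣ (X : Polynomial Fq)) := by
    intro hdvd
    obtain ⟨u, hu⟩ := hPirr.associated_of_dvd irreducible_X hdvd
    have hz : aeval α (X : Polynomial Fq) = 0 := by
      rw [← hu, map_mul, minpoly.aeval Fq α, zero_mul]
    exact hα (by rwa [aeval_X] at hz)
  -- linear independence
  have hli : LinearIndependent Fq (fun i : Fin n => α ^ q ^ (i : ℕ)) := by
    rw [Fintype.linearIndependent_iff]
    intro g hg
    by_contra hne
    push_neg at hne
    obtain ⟨i0, hi0⟩ := hne
    set g' : ℕ → Fq := fun j => if h : j < n then g ⟨j, h⟩ else 0 with hg'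
    set G : Polynomial Fq := ∑ j ∈ Finset.range n, C (g' j) * X ^ q ^ j with hG
    set G₁ : Polynomial Fq := ∑ j ∈ Finset.range n, C (g' j) * X ^ (q ^ j - 1) with hG₁
    have hXG : X * G₁ = G := by
      rw [hG, hG₁, Finset.mul_sum]
      refine Finset.sum_congr rfl fun j _ => ?_
      have hqj : 1 ≤ q ^ j := Nat.one_le_pow _ _ (by omega)
      rw [mul_left_comm, ← pow_succ']
      congr 2
      omega
    have hGne : G ≠ 0 := by
      intro h
      have h2 := aux_coeff (Fq := Fq) hq2 (Finset.range n) g' (j := (i0 : ℕ)) (by simp [i0.isLt])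
      rw [← hG, h, coeff_zero] at h2
      rw [hg'] at h2
      exact hi0 (by simpa [i0.isLt] using h2.symm)
    have hGα : aeval α G = 0 := by
      rw [hG, map_sum, ← hg]
      rw [Finset.sum_range (fun j => aeval α (C (g' j) * X ^ q ^ j))]
      refine Finset.sum_congr rfl fun j _ => ?_
      simp [hg', j.isLt, Algebra.smul_def]
    have hPG : P ∣ G := minpoly.dvd Fq α hGα
    have hG₁ne : G₁ ≠ 0 := fun h => hGne (by rw [← hXG, h, mul_zero])
    have hPG₁ : P ∣ G₁ := by
      rw [← hXG] at hPG
      exact (hPirr.prime.dvd_mul.mp hPG).resolve_left hPX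
    have hG₁deg : G₁.natDegree ≤ q ^ (n - 1) - 1 := by
      rw [hG₁]
      refine natDegree_sum_le_of_forall_le _ _ fun j hj => ?_
      refine (natDegree_C_mul_le _ _).trans ?_
      rw [natDegree_X_pow]
      have hj' : j ≤ n - 1 := by have := Finset.mem_range.mp hj; omega
      have : q ^ j ≤ q ^ (n - 1) := Nat.pow_le_pow_right (by omega) hj'
      omega
    have hlt : q ^ (n - 1) < q ^ n := Nat.pow_lt_pow_right (by omega) (by omega)
    have hle : P.natDegree ≤ G₁.natDegree := natDegree_le_of_dvd hPG₁ hG₁ne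
    have hq1 : 1 ≤ q ^ (n - 1) := Nat.one_le_pow _ _ (by omega)
    omega
  refine ⟨hli, ?_⟩
  -- the span equals the set of roots
  set S := Submodule.span Fq (Set.range fun i : Fin n => α ^ q ^ (i : ℕ)) with hS
  have hsub : (S : Set E) ⊆ {x : E | aeval x L = 0} := by
    have hle : S ≤ LinearMap.ker φ := by
      rw [hS, Submodule.span_le]
      rintro x ⟨i, rfl⟩
      simp only [SetLike.mem_coe, LinearMap.mem_ker, hφev]
      exact hrootpow i
    intro x hx
    have := hle hx
    rw [LinearMap.mem_ker, hφev] at this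
    exact this
  have hScard : Nat.card S = q ^ n := by
    haveI : Fintype S := Fintype.ofFinite _
    rw [Nat.card_eq_fintype_card, Module.card_eq_pow_finrank (K := Fq) (V := S), hFq,
      finrank_span_eq_card hli]
    simp
  refine Set.eq_of_subset_of_ncard_le hsub ?_ (Set.toFinite _)
  rw [← Nat.card_coe_set_eq, ← Nat.card_coe_set_eq, hVcard]
  rw [show Nat.card ((S : Set E) : Type) = Nat.card S from rfl, hScard]
end

section
/- Let L be a q-linearized polynomial over F_q of q-degree n with L(x)/x irreducible over F_q, root space V in splitting field E, and let ε_r : H_{n,r}(F_q) → E be the evaluation map sending a homogeneous polynomial of degree r in n variables to its value at the basis (α, α^q, ..., α^{q^{n−1}}) for a nonzero root α. Then ε_r is injective for 1 ≤ r ≤ q − 1. -/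
/-!
Substituting `xᵢ ↦ X ^ q ^ i` sends a homogeneous `P` of degree `r < q` to a univariate `Q`
without collisions: a monomial `x^d` goes to `X ^ ∑ dᵢ qⁱ`, a base-`q` number with digits
`dᵢ ≤ r < q`. Hence `Q ≠ 0`, `deg Q < qⁿ`, and `Q(0) = 0` since `r ≥ 1`. If `P` vanishes at
`(α, α^q, …)` then `Q(α) = 0`, so `Q / X` is a nonzero multiple of the minimal polynomial of
`α ≠ 0`. That is `M` up to a scalar, of degree `deg L - 1 = qⁿ - 1`, which is too large.
-/

open Polynomial

section KroneckerSubstitution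

variable {R σ : Type*} [CommSemiring R] (w : σ → ℕ)

theorem aeval_X_pow_monomial (d : σ →₀ ℕ) (a : R) :
    MvPolynomial.aeval (fun i => (X : R[X]) ^ w i) (MvPolynomial.monomial d a) =
      C a * X ^ Finsupp.weight w d := by
  simp [MvPolynomial.aeval_monomial, Finsupp.weight_apply, Finsupp.prod, Finsupp.sum,
    ← pow_mul, Finset.prod_pow_eq_pow_sum, mul_comm]

variable {w} {P : MvPolynomial σ R}

theorem coeff_aeval_X_pow_weight
    (hw : Set.InjOn (Finsupp.weight w) (P.support : Set (σ →₀ ℕ)))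
    {d : σ →₀ ℕ} (hd : d ∈ P.support) :
    (MvPolynomial.aeval (fun i => (X : R[X]) ^ w i) P).coeff (Finsupp.weight w d) =
      P.coeff d := by
  conv_lhs => rw [P.as_sum]
  rw [map_sum, finsetSum_coeff, Finset.sum_eq_single d]
  · simp [aeval_X_pow_monomial]
  · intro d' hd' hne
    rw [aeval_X_pow_monomial, coeff_C_mul_X_pow, if_neg fun h => hne (hw hd hd' h).symm]
  · exact fun h => absurd hd h

theorem aeval_X_pow_ne_zero (hw : Set.InjOn (Finsupp.weight w) (P.support : Set (σ →₀ ℕ)))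
    (hP : P ≠ 0) :
    MvPolynomial.aeval (fun i => (X : R[X]) ^ w i) P ≠ 0 := by
  obtain ⟨d, hd⟩ := MvPolynomial.support_nonempty.mpr hP
  intro h
  have := coeff_aeval_X_pow_weight hw hd
  rw [h, coeff_zero] at this
  exact MvPolynomial.mem_support_iff.mp hd this.symm

theorem natDegree_aeval_X_pow_le {N : ℕ} (h : ∀ d ∈ P.support, Finsupp.weight w d ≤ N) :
    (MvPolynomial.aeval (fun i => (X : R[X]) ^ w i) P).natDegree ≤ N := by
  rw [P.as_sum, map_sum]
  refine natDegree_sum_le_of_forall_le _ _ fun d hd => ?_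
  rw [aeval_X_pow_monomial]
  exact (natDegree_C_mul_X_pow_le _ _).trans (h d hd)

theorem coeff_zero_aeval_X_pow (hw : ∀ i, w i ≠ 0) :
    (MvPolynomial.aeval (fun i => (X : R[X]) ^ w i) P).coeff 0 =
      MvPolynomial.constantCoeff P := by
  rw [coeff_zero_eq_aeval_zero, MvPolynomial.comp_aeval_apply]
  simp [zero_pow (hw _)]

end KroneckerSubstitution

theorem Finsupp.weight_pow_eq_finFunctionFinEquiv {q n : ℕ} {d : Fin n →₀ ℕ}
    (hd : ∀ i, d i < q) :
    Finsupp.weight (fun i : Fin n => q ^ (i : ℕ)) d =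
      finFunctionFinEquiv (fun i => ⟨d i, hd i⟩) := by
  simp [Finsupp.weight_apply, Finsupp.sum_fintype]

theorem Finsupp.injOn_weight_pow (q n : ℕ) :
    Set.InjOn (Finsupp.weight fun i : Fin n => q ^ (i : ℕ)) {d | ∀ i, d i < q} := by
  intro d hd d' hd' h
  rw [Finsupp.weight_pow_eq_finFunctionFinEquiv hd,
    Finsupp.weight_pow_eq_finFunctionFinEquiv hd', Fin.val_inj,
    finFunctionFinEquiv.apply_eq_iff_eq] at h
  ext i
  exact congrArg Fin.val (congrFun h i)

theorem Finsupp.weight_pow_lt {q n : ℕ} {d : Fin n →₀ ℕ} (hd : ∀ i, d i < q) :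
    Finsupp.weight (fun i : Fin n => q ^ (i : ℕ)) d < q ^ n := by
  rw [Finsupp.weight_pow_eq_finFunctionFinEquiv hd]
  exact Fin.isLt _

theorem MvPolynomial.IsHomogeneous.le_of_mem_support {R σ : Type*} [CommSemiring R]
    {P : MvPolynomial σ R} {r : ℕ} (hP : P.IsHomogeneous r) {d : σ →₀ ℕ} (hd : d ∈ P.support)
    (i : σ) : d i ≤ r :=
  (Finsupp.le_degree i d).trans_eq (hP.degree_eq_sum_deg_support hd).symm

theorem MvPolynomial.IsHomogeneous.constantCoeff_eq_zero {R σ : Type*} [CommSemiring R]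
    {P : MvPolynomial σ R} {r : ℕ} (hP : P.IsHomogeneous r) (hr : r ≠ 0) :
    MvPolynomial.constantCoeff P = 0 :=
  hP.coeff_eq_zero (by simpa using hr.symm)

theorem natDegree_minpoly_lt_of_coeff_zero_eq_zero {K B : Type*} [Field K] [Ring B] [IsDomain B]
    [Algebra K B] {x : B} (hx : x ≠ 0) {Q : K[X]} (hQ : Q ≠ 0) (h0 : Q.coeff 0 = 0)
    (hQx : aeval x Q = 0) : (minpoly K x).natDegree < Q.natDegree := by
  obtain ⟨Q', rfl⟩ := X_dvd_iff.mpr h0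
  have hQ' : Q' ≠ 0 := right_ne_zero_of_mul hQ
  have hQ'x : aeval x Q' = 0 := by
    simpa [hx] using hQx
  rw [natDegree_X_mul hQ']
  exact Nat.lt_succ_of_le <|
    natDegree_le_natDegree (minpoly.degree_le_of_ne_zero K x hQ' hQ'x)

theorem natDegree_minpoly_of_irreducible {K B : Type*} [Field K] [Ring B] [Nontrivial B]
    [Algebra K B] {x : B} {M : K[X]} (hM : Irreducible M) (hMx : aeval x M = 0) :
    (minpoly K x).natDegree = M.natDegree := by
  rw [← minpoly.eq_of_irreducible hM hMx,
    natDegree_mul_C (inv_ne_zero (leadingCoeff_ne_zero.mpr hM.ne_zero))]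

theorem coeff_sum_C_mul_X_pow_pow {K : Type*} [Semiring K] {q : ℕ} (hq : 1 < q) (c : ℕ → K)
    {n k : ℕ} (hk : k ≤ n) :
    (∑ i ∈ Finset.range (n + 1), C (c i) * X ^ q ^ i).coeff (q ^ k) = c k := by
  rw [finsetSum_coeff, Finset.sum_eq_single k]
  · simp
  · intro i _ hik
    rw [coeff_C_mul_X_pow, if_neg fun h => hik (Nat.pow_right_injective hq h).symm]
  · simp [Nat.lt_succ_of_le hk]

theorem stmt_11_general (q n : ℕ)
    (Fq E : Type) [Field Fq] [Fintype Fq] (hFq : Fintype.card Fq = q)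
    [Field E] [Algebra Fq E]
    (c : ℕ → Fq) (hn : c n ≠ 0)
    (L : Polynomial Fq) (hL : L = ∑ i ∈ Finset.range (n + 1), C (c i) * X ^ q ^ i)
    (M : Polynomial Fq) (hM : L = X * M) (hirr : Irreducible M)
    (α : E) (hα : α ≠ 0) (hroot : aeval α L = 0) :
    ∀ r : ℕ, 1 ≤ r → r ≤ q - 1 →
      ∀ P ∈ MvPolynomial.homogeneousSubmodule (Fin n) Fq r,
        MvPolynomial.aeval (fun i : Fin n => α ^ q ^ (i : ℕ)) P = 0 → P = 0 := by
  intro r hr1 hrq P hP hPα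
  by_contra hP0
  have hq : 1 < q := hFq ▸ Fintype.one_lt_card
  replace hP : P.IsHomogeneous r := (MvPolynomial.mem_homogeneousSubmodule r P).mp hP
  have hdigits : ∀ d ∈ P.support, ∀ i, d i < q := fun d hd i =>
    (hP.le_of_mem_support hd i).trans_lt (by omega)
  set Q := MvPolynomial.aeval (fun i : Fin n => (X : Fq[X]) ^ q ^ (i : ℕ)) P
  have hQ0 : Q ≠ 0 := aeval_X_pow_ne_zero ((Finsupp.injOn_weight_pow q n).mono hdigits) hP0
  have hQα : aeval α Q = 0 := by
    rw [MvPolynomial.comp_aeval_apply]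
    simpa using hPα
  have hQcoeff : Q.coeff 0 = 0 := by
    rw [coeff_zero_aeval_X_pow fun i => (pow_pos (by omega) _).ne']
    exact hP.constantCoeff_eq_zero (by omega)
  have hQdeg : Q.natDegree ≤ q ^ n - 1 := natDegree_aeval_X_pow_le fun d hd =>
    Nat.le_sub_one_of_lt (Finsupp.weight_pow_lt (hdigits d hd))
  have hMα : aeval α M = 0 := by
    simpa [hM, hα] using hroot
  have hLdeg : q ^ n ≤ L.natDegree :=
    le_natDegree_of_ne_zero (by rwa [hL, coeff_sum_C_mul_X_pow_pow hq c le_rfl])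
  have hLM : L.natDegree = M.natDegree + 1 := by
    rw [hM, natDegree_X_mul hirr.ne_zero]
  have hminpoly := natDegree_minpoly_lt_of_coeff_zero_eq_zero hα hQ0 hQcoeff hQα
  rw [natDegree_minpoly_of_irreducible hirr hMα] at hminpoly
  omega

/-- The evaluation map on homogeneous polynomials of degree `r`, at the
basis `(α, α^q, ..., α^{q^{n-1}})` of the root space, is injective for `1 ≤ r ≤ q - 1`. -/
theorem stmt_11 (p a q n : ℕ) [Fact p.Prime] (ha : 0 < a) (hq : q = p ^ a)
    (Fq E : Type) [Field Fq] [Fintype Fq] (hFq : Fintype.card Fq = q)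
    [Field E] [Algebra Fq E]
    (c : ℕ → Fq) (hn : c n ≠ 0)
    (L : Polynomial Fq) (hL : L = ∑ i ∈ Finset.range (n + 1), C (c i) * X ^ q ^ i)
    (M : Polynomial Fq) (hM : L = X * M) (hirr : Irreducible M)
    (hsplit : L.IsSplittingField Fq E)
    (α : E) (hα : α ≠ 0) (hroot : aeval α L = 0) :
    ∀ r : ℕ, 1 ≤ r → r ≤ q - 1 →
      ∀ P ∈ MvPolynomial.homogeneousSubmodule (Fin n) Fq r,
        MvPolynomial.aeval (fun i : Fin n => α ^ q ^ (i : ℕ)) P = 0 → P = 0 :=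
  stmt_11_general q n Fq E hFq c hn L hL M hM hirr α hα hroot
end

section
/- Let L be a q-linearized polynomial over F_q of q-degree n ≥ 2 with L(x)/x irreducible over F_q, with splitting field E. Then the evaluation map ε_r : H_{n,r}(F_q) → E (evaluation at the basis α, α^q, ..., α^{q^{n−1}} of the root space) is not injective for every r ≥ q + 1. -/
open Polynomial

/-- For `n ≥ 2`, the evaluation map `ε_r` at the basis
`(α, α^q, ..., α^{q^{n-1}})` is not injective for every `r ≥ q + 1`. -/
theorem stmt_14 (p a q n : ℕ) [Fact p.Prime] (ha : 0 < a) (hq : q = p ^ a) (hn2 : 2 ≤ n)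
    (Fq E : Type) [Field Fq] [Fintype Fq] (hFq : Fintype.card Fq = q)
    [Field E] [Algebra Fq E]
    (c : ℕ → Fq) (hn : c n ≠ 0)
    (L : Polynomial Fq) (hL : L = ∑ i ∈ Finset.range (n + 1), C (c i) * X ^ q ^ i)
    (M : Polynomial Fq) (hM : L = X * M) (hirr : Irreducible M)
    (hsplit : L.IsSplittingField Fq E)
    (α : E) (hα : α ≠ 0) (hroot : aeval α L = 0) :
    ∀ r : ℕ, q + 1 ≤ r →
      ∃ P : MvPolynomial (Fin n) Fq,
        P ∈ MvPolynomial.homogeneousSubmodule (Fin n) Fq r ∧ P ≠ 0 ∧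
        MvPolynomial.aeval (fun i : Fin n => α ^ q ^ (i : ℕ)) P = 0 := by
  classical
  have hq2 : 2 ≤ q := by
    rw [hq]
    calc 2 ≤ p := (Fact.out (p := p.Prime)).two_le
    _ ≤ p ^ a := Nat.le_self_pow ha.ne' p
  intro r hr
  set s : ℕ := r - (q + 1) with hs
  rcases Nat.lt_or_ge n 3 with h3 | h3
  · -- n = 2
    have hn2' : n = 2 := by omega
    subst hn2'
    set i0 : Fin 2 := ⟨0, by omega⟩ with hi0'
    set i1 : Fin 2 := ⟨1, by omega⟩ with hi1'
    have h01 : i0 ≠ i1 := by simp [hi0', hi1', Fin.ext_iff]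
    have hX1 : (MvPolynomial.X i1 : MvPolynomial (Fin 2) Fq)
        = MvPolynomial.monomial (Finsupp.single i1 1) 1 := by
      rw [← MvPolynomial.X_pow_eq_monomial, pow_one]
    refine ⟨(MvPolynomial.C (c 2) * MvPolynomial.X i1 ^ (q + 1)
        + MvPolynomial.C (c 1) * (MvPolynomial.X i0 ^ q * MvPolynomial.X i1)
        + MvPolynomial.C (c 0) * MvPolynomial.X i0 ^ (q + 1))
        * MvPolynomial.X i0 ^ s, ?_, ?_, ?_⟩
    · rw [MvPolynomial.mem_homogeneousSubmodule]
      have h1 : (MvPolynomial.C (c 2) * MvPolynomial.X i1 ^ (q + 1)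
          + MvPolynomial.C (c 1) * (MvPolynomial.X i0 ^ q * MvPolynomial.X i1)
          + MvPolynomial.C (c 0) * MvPolynomial.X i0 ^ (q + 1)
          : MvPolynomial (Fin 2) Fq).IsHomogeneous (q + 1) := by
        refine ((MvPolynomial.isHomogeneous_C_mul_X_pow _ _ _).add ?_).add
          (MvPolynomial.isHomogeneous_C_mul_X_pow _ _ _)
        exact ((MvPolynomial.isHomogeneous_X_pow i0 q).mul
          (MvPolynomial.isHomogeneous_X _ i1)).C_mul _
      have := h1.mul (MvPolynomial.isHomogeneous_X_pow i0 s)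
      have hqs : q + 1 + s = r := by omega
      rwa [hqs] at this
    · -- nonzero
      have t1 : MvPolynomial.C (c 2) * MvPolynomial.X i1 ^ (q + 1) * MvPolynomial.X i0 ^ s
          = MvPolynomial.monomial (Finsupp.single i1 (q+1) + Finsupp.single i0 s) (c 2) := by
        rw [MvPolynomial.X_pow_eq_monomial, MvPolynomial.X_pow_eq_monomial,
          MvPolynomial.C_mul_monomial, MvPolynomial.monomial_mul]
        simp
      have t2 : MvPolynomial.C (c 1) * (MvPolynomial.X i0 ^ q * MvPolynomial.X i1)
          * MvPolynomial.X i0 ^ s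
          = MvPolynomial.monomial (Finsupp.single i0 q + Finsupp.single i1 1
              + Finsupp.single i0 s) (c 1) := by
        rw [hX1, MvPolynomial.X_pow_eq_monomial, MvPolynomial.X_pow_eq_monomial,
          MvPolynomial.monomial_mul, MvPolynomial.C_mul_monomial, MvPolynomial.monomial_mul]
        simp
      have t3 : MvPolynomial.C (c 0) * MvPolynomial.X i0 ^ (q + 1) * MvPolynomial.X i0 ^ s
          = MvPolynomial.monomial (Finsupp.single i0 (q+1) + Finsupp.single i0 s) (c 0) := by
        rw [MvPolynomial.X_pow_eq_monomial, MvPolynomial.X_pow_eq_monomial,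
          MvPolynomial.C_mul_monomial, MvPolynomial.monomial_mul]
        simp
      intro hP
      rw [add_mul, add_mul, t1, t2, t3] at hP
      have hcoeff := congrArg
        (MvPolynomial.coeff (Finsupp.single i1 (q + 1) + Finsupp.single i0 s)) hP
      have e1 : ((Finsupp.single i0 q + Finsupp.single i1 1 + Finsupp.single i0 s
          : Fin 2 →₀ ℕ)) i1 = 1 := by
        simp [Finsupp.single_apply, h01]
      have e2 : ((Finsupp.single i1 (q+1) + Finsupp.single i0 s : Fin 2 →₀ ℕ)) i1 = q + 1 := by
        simp [Finsupp.single_apply, h01]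
      have e3 : ((Finsupp.single i0 (q+1) + Finsupp.single i0 s : Fin 2 →₀ ℕ)) i1 = 0 := by
        simp [Finsupp.single_apply, h01]
      have hne2 : Finsupp.single i0 q + Finsupp.single i1 1 + Finsupp.single i0 s
          ≠ Finsupp.single i1 (q + 1) + Finsupp.single i0 s := by
        intro h
        rw [h, e2] at e1
        omega
      have hne3 : Finsupp.single i0 (q + 1) + Finsupp.single i0 s
          ≠ Finsupp.single i1 (q + 1) + Finsupp.single i0 s := by
        intro h
        rw [h, e2] at e3
        omega
      rw [MvPolynomial.coeff_add, MvPolynomial.coeff_add, MvPolynomial.coeff_monomial,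
        MvPolynomial.coeff_monomial, MvPolynomial.coeff_monomial, if_pos rfl, if_neg hne2,
        if_neg hne3, MvPolynomial.coeff_zero] at hcoeff
      simp only [add_zero] at hcoeff
      exact hn hcoeff
    · -- evaluation is zero
      rw [hL] at hroot
      simp only [map_sum, Finset.sum_range_succ, Finset.sum_range_zero, zero_add, map_add,
        map_mul, aeval_C, map_pow, aeval_X, pow_zero, pow_one] at hroot
      simp only [map_mul, map_add, map_pow, MvPolynomial.aeval_X, MvPolynomial.aeval_C,
        hi0', hi1']
      simp only [pow_zero, pow_one]
      have : (algebraMap Fq E) (c 2) * (α ^ q) ^ (q + 1)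
          + (algebraMap Fq E) (c 1) * (α ^ q * α ^ q)
          + (algebraMap Fq E) (c 0) * α ^ (q + 1) = 0 := by
        linear_combination α ^ q * hroot
      rw [this, zero_mul]
  · -- n ≥ 3
    set i0 : Fin n := ⟨0, by omega⟩ with hi0'
    set i1 : Fin n := ⟨1, by omega⟩ with hi1'
    set i2 : Fin n := ⟨2, by omega⟩ with hi2'
    have h02 : i0 ≠ i2 := by simp [hi0', hi2', Fin.ext_iff]
    have h12 : i1 ≠ i2 := by simp [hi1', hi2', Fin.ext_iff]
    refine ⟨MvPolynomial.X i0 ^ s *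
      (MvPolynomial.X i1 ^ (q + 1) - MvPolynomial.X i0 ^ q * MvPolynomial.X i2), ?_, ?_, ?_⟩
    · rw [MvPolynomial.mem_homogeneousSubmodule]
      have h1 : (MvPolynomial.X i1 ^ (q + 1) - MvPolynomial.X i0 ^ q * MvPolynomial.X i2
          : MvPolynomial (Fin n) Fq).IsHomogeneous (q + 1) := by
        rw [sub_eq_add_neg]
        exact (MvPolynomial.isHomogeneous_X_pow i1 (q+1)).add
          (((MvPolynomial.isHomogeneous_X_pow i0 q).mul
            (MvPolynomial.isHomogeneous_X _ i2)).neg)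
      have := (MvPolynomial.isHomogeneous_X_pow i0 s).mul h1
      have hqs : s + (q + 1) = r := by omega
      rwa [hqs] at this
    · -- nonzero
      have hX2 : (MvPolynomial.X i2 : MvPolynomial (Fin n) Fq)
          = MvPolynomial.monomial (Finsupp.single i2 1) 1 := by
        rw [← MvPolynomial.X_pow_eq_monomial, pow_one]
      have t1 : (MvPolynomial.X i0 ^ s * MvPolynomial.X i1 ^ (q+1) : MvPolynomial (Fin n) Fq)
          = MvPolynomial.monomial (Finsupp.single i0 s + Finsupp.single i1 (q+1)) 1 := by
        rw [MvPolynomial.X_pow_eq_monomial, MvPolynomial.X_pow_eq_monomial,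
          MvPolynomial.monomial_mul, one_mul]
      have t2 : (MvPolynomial.X i0 ^ s * (MvPolynomial.X i0 ^ q * MvPolynomial.X i2)
          : MvPolynomial (Fin n) Fq)
          = MvPolynomial.monomial (Finsupp.single i0 s + (Finsupp.single i0 q
              + Finsupp.single i2 1)) 1 := by
        rw [hX2, MvPolynomial.X_pow_eq_monomial, MvPolynomial.X_pow_eq_monomial,
          MvPolynomial.monomial_mul, MvPolynomial.monomial_mul]
        simp
      intro hP
      rw [mul_sub, t1, t2] at hP
      have hcoeff := congrArg
        (MvPolynomial.coeff (Finsupp.single i0 s + Finsupp.single i1 (q + 1))) hP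
      have e1 : ((Finsupp.single i0 s + (Finsupp.single i0 q + Finsupp.single i2 1)
          : Fin n →₀ ℕ)) i2 = 1 := by
        simp [Finsupp.single_apply, h02]
      have e2 : ((Finsupp.single i0 s + Finsupp.single i1 (q+1) : Fin n →₀ ℕ)) i2 = 0 := by
        simp [Finsupp.single_apply, h02, h12]
      have hne : Finsupp.single i0 s + (Finsupp.single i0 q + Finsupp.single i2 1)
          ≠ Finsupp.single i0 s + Finsupp.single i1 (q + 1) := by
        intro h
        rw [h, e2] at e1
        omega
      rw [MvPolynomial.coeff_sub, MvPolynomial.coeff_monomial, MvPolynomial.coeff_monomial,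
        if_pos rfl, if_neg hne, MvPolynomial.coeff_zero] at hcoeff
      simp at hcoeff
    · simp only [map_mul, map_sub, map_pow, MvPolynomial.aeval_X, hi0', hi1', hi2']
      simp only [pow_zero, pow_one]
      have : (α ^ q) ^ (q + 1) - α ^ q * α ^ q ^ 2 = 0 := by
        rw [← pow_mul, ← pow_add, sub_eq_zero]
        congr 1
        ring
      rw [this, mul_zero]
end

section
/- Let s > 1 and suppose F_{q^s} is not contained in the field F (of characteristic p, containing F_q). Let L be a q^s-linearized polynomial in F[x] with no repeated roots in its splitting field E. Then the evaluation map ε_s from homogeneous polynomials of degree s over F_q (in n variables, n = q-degree of L) into E, evaluated at an F_q-basis of the root space, is not injective. -/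
/-!
If `ω ^ q ^ s = ω`, then `L (ω * x) = ω * L x` for the `q ^ s`-linearized polynomial `L`, so the
roots of `L` form a module over `𝔽_{q^s}`. Choosing `ω ∈ 𝔽_{q^s} \ 𝔽_q` in an algebraic closure and
a nonzero root `α = v i₀`, the root `ω * α` already lies in the splitting field `E`, hence so does
`ω`. As `ω` is fixed by the `s`-th power of Frobenius it is a root of some nonzero `f ∈ 𝔽_q[X]` of
degree at most `s`. If `ω * α = B(v)` for a linear form `B`, the homogenization of `f`, evaluated
at `(B, X i₀)`, is a form of degree `s` that vanishes at `v`; it is nonzero because a substitution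
sending `(B, X i₀)` to `(X, 1)` turns it back into `f`.
-/

open Polynomial

namespace FiniteField

variable {K : Type*} [Field K] [Fintype K]

theorem aeval_pow_card_pow {A : Type*} [CommRing A] [Algebra K A] (f : K[X]) (x : A) (n : ℕ) :
    aeval x f ^ Fintype.card K ^ n = aeval (x ^ Fintype.card K ^ n) f := by
  simpa only [AlgHom.coe_pow, coe_frobeniusAlgHom, pow_iterate] using
    (aeval_algHom_apply (frobeniusAlgHom K A ^ n) x f).symm

theorem exists_aeval_eq_zero_of_pow_card_pow_eq_self {E : Type*} [Field E] [Algebra K E]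
    {s : ℕ} (hs : s ≠ 0) {ω : E} (hω : ω ^ Fintype.card K ^ s = ω) :
    ∃ f : K[X], f ≠ 0 ∧ f.natDegree ≤ s ∧ aeval ω f = 0 := by
  set q := Fintype.card K
  have hq : 1 < q := Fintype.one_lt_card
  -- Pigeonhole: the `q ^ (s + 1)` polynomials of degree `≤ s` take at most `q ^ s` values at `ω`.
  set R := (X ^ q ^ s - X : K[X]).rootSet E
  have hR : ∀ f : K[X], aeval ω f ∈ R := fun f => by
    rw [mem_rootSet]
    refine ⟨X_pow_card_pow_sub_X_ne_zero K hs hq, ?_⟩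
    rw [map_sub, map_pow, aeval_X, aeval_pow_card_pow, hω, sub_self]
  by_contra! h
  have hinj :
      Function.Injective fun f : degreeLT K (s + 1) => (⟨aeval ω (f : K[X]), hR f⟩ : R) := by
    intro f g hfg
    by_contra hne
    have hfg0 : (f - g : K[X]) ≠ 0 := sub_ne_zero.mpr (Subtype.coe_injective.ne hne)
    refine h _ hfg0 ?_ (by simpa [sub_eq_zero] using hfg)
    exact Nat.lt_succ_iff.mp ((natDegree_lt_iff_degree_lt hfg0).mpr (mem_degreeLT.mp (f - g).2))
  have hcard := Nat.card_le_card_of_injective _ hinj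
  rw [Nat.card_congr (degreeLTEquiv K (s + 1)).toEquiv, Nat.card_fun, Nat.card_eq_fintype_card,
    Nat.card_fin, Nat.card_coe_set_eq] at hcard
  have := (hcard.trans (ncard_rootSet_le _ E)).trans_eq (X_pow_card_pow_sub_X_natDegree_eq K hs hq)
  exact (Nat.pow_lt_pow_right hq s.lt_succ_self).not_ge this

theorem exists_pow_card_pow_eq_self_and_pow_card_ne_self (K L : Type*) [Field K] [Fintype K]
    [Field L] [IsAlgClosed L] [Algebra K L] {s : ℕ} (hs : 1 < s) :
    ∃ ω : L, ω ^ Fintype.card K ^ s = ω ∧ ω ^ Fintype.card K ≠ ω := by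
  set q := Fintype.card K
  have hq : 1 < q := Fintype.one_lt_card
  have hsep : (X ^ q ^ s - X : K[X]).Separable :=
    galois_poly_separable (ringChar K) (q ^ s)
      (ringChar.dvd (by rw [Nat.cast_pow, cast_card_eq_zero, zero_pow (by omega)]))
  -- `X ^ q ^ s - X` has `q ^ s` distinct roots, `X ^ q - X` at most `q`.
  by_contra! h
  have hsub : (X ^ q ^ s - X : K[X]).rootSet L ⊆ (X ^ q - X : K[X]).rootSet L := by
    intro x hx
    rw [mem_rootSet] at hx ⊢
    refine ⟨X_pow_card_sub_X_ne_zero K hq, ?_⟩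
    simpa [sub_eq_zero] using h x (by simpa [sub_eq_zero] using hx.2)
  have hcard := Set.ncard_le_ncard hsub (Set.toFinite _)
  rw [← Nat.card_coe_set_eq, Nat.card_eq_fintype_card, card_rootSet_eq_natDegree hsep
    (IsAlgClosed.splits _), X_pow_card_pow_sub_X_natDegree_eq K (by omega) hq] at hcard
  have := hcard.trans ((ncard_rootSet_le _ L).trans_eq (X_pow_card_sub_X_natDegree_eq K hq))
  exact (Nat.pow_lt_pow_right hq hs).not_ge (by rwa [pow_one])

end FiniteField

section Linearized

variable {F : Type*} [CommSemiring F] {Q : ℕ}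

theorem aeval_mul_sum_C_mul_X_pow_pow {A : Type*} [CommSemiring A] [Algebra F A] {ω : A}
    (hω : ω ^ Q = ω) (t : Finset ℕ) (c : ℕ → F) (x : A) :
    aeval (ω * x) (∑ i ∈ t, C (c i) * X ^ Q ^ i) = ω * aeval x (∑ i ∈ t, C (c i) * X ^ Q ^ i) := by
  have hωi : ∀ i : ℕ, ω ^ Q ^ i = ω := fun i => by
    induction i with
    | zero => rw [pow_zero, pow_one]
    | succ i ih => rw [pow_succ, pow_mul, ih, hω]
  simp only [map_sum, map_mul, aeval_C, map_pow, aeval_X, mul_pow, hωi, Finset.mul_sum,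
    mul_left_comm ω]

theorem sum_C_mul_X_pow_pow_ne_zero (hQ : 1 < Q) {t : Finset ℕ} {m : ℕ} (hm : m ∈ t)
    {c : ℕ → F} (hc : c m ≠ 0) : (∑ i ∈ t, C (c i) * X ^ Q ^ i) ≠ 0 := by
  intro h
  apply hc
  simpa [finsetSum_coeff, coeff_C_mul_X_pow, Nat.pow_right_injective hQ |>.eq_iff, hm]
    using congr_arg (coeff · (Q ^ m)) h

end Linearized

theorem mem_range_algebraMap_of_aeval_mul_eq_zero {F E K : Type*} [Field F] [Field E] [Field K]
    [Algebra F E] [Algebra F K] [Algebra E K] [IsScalarTower F E K] {L : F[X]} (hL : L ≠ 0)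
    (hsplit : (L.map (algebraMap F E)).Splits) {α : E} (hα : α ≠ 0) {ω : K}
    (hω : aeval (ω * algebraMap E K α) L = 0) : ω ∈ (algebraMap E K).range := by
  obtain ⟨β, hβ⟩ := hsplit.mem_range_of_isRoot (map_ne_zero hL) (i := algebraMap E K)
    (by rwa [IsRoot, map_map, ← IsScalarTower.algebraMap_eq, eval_map_algebraMap])
  exact ⟨β / α, by rw [map_div₀, hβ, mul_div_cancel_right₀ _ (by simpa using hα)]⟩

theorem Polynomial.aeval_homogenize {R K : Type*} [CommSemiring R] [Field K] [Algebra R K]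
    {p : R[X]} {n : ℕ} (hn : p.natDegree ≤ n) (x : Fin 2 → K) (hx : x 1 ≠ 0) :
    MvPolynomial.aeval x (p.homogenize n) = aeval (x 0 / x 1) p * x 1 ^ n := by
  rw [MvPolynomial.aeval_def, ← MvPolynomial.eval_map, ← homogenize_map,
    eval_homogenize (natDegree_map_le.trans hn) x hx, eval_map_algebraMap]

section LinearForm

variable {K σ : Type*} [Field K] [Fintype σ]

theorem exists_ne_and_ne_zero_of_sum_smul_eq_mul {E : Type*} [Field E] [Algebra K E]
    {v : σ → E} {i : σ} (hv : v i ≠ 0) {ω : E} (hω : ω ∉ Set.range (algebraMap K E))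
    {b : σ → K} (hb : ∑ j, b j • v j = ω * v i) : ∃ j ≠ i, b j ≠ 0 := by
  by_contra! h
  refine hω ⟨b i, mul_right_cancel₀ hv ?_⟩
  rw [← hb, Fintype.sum_eq_single i fun j hj => by rw [h j hj, zero_smul], Algebra.smul_def]

theorem exists_aeval_sum_smul_X_eq_X [DecidableEq σ] (b : σ → K) {i j : σ} (hji : j ≠ i)
    (hb : b j ≠ 0) :
    ∃ u : σ → K[X],
      u i = 1 ∧ MvPolynomial.aeval u (∑ k, b k • MvPolynomial.X k : MvPolynomial σ K) = X := by
  refine ⟨Pi.single i 1 + Pi.single j (C (b j)⁻¹ * (X - C (b i)) : K[X]), by simp [hji.symm], ?_⟩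
  simp only [map_sum, map_smul, MvPolynomial.aeval_X, Pi.add_apply, smul_add,
    Finset.sum_add_distrib, Pi.single_apply, smul_ite, smul_zero, Finset.sum_ite_eq',
    Finset.mem_univ, if_true, smul_eq_C_mul, ← mul_assoc, ← C_mul, mul_inv_cancel₀ hb, C_1,
    one_mul, mul_one, add_sub_cancel]

end LinearForm

theorem exists_isHomogeneous_ne_zero_aeval_eq_zero {K E σ : Type*} [Field K] [Field E]
    [Algebra K E] [Fintype σ] [DecidableEq σ] {v : σ → E} {i : σ} (hv : v i ≠ 0) {ω : E}
    (hω : ω ∉ Set.range (algebraMap K E)) (hmem : ω * v i ∈ Submodule.span K (Set.range v))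
    {s : ℕ} {f : K[X]} (hf : f ≠ 0) (hfs : f.natDegree ≤ s) (hfω : aeval ω f = 0) :
    ∃ P : MvPolynomial σ K, P.IsHomogeneous s ∧ P ≠ 0 ∧ MvPolynomial.aeval v P = 0 := by
  obtain ⟨b, hb⟩ := (Submodule.mem_span_range_iff_exists_fun K).mp hmem
  obtain ⟨j, hji, hbj⟩ := exists_ne_and_ne_zero_of_sum_smul_eq_mul hv hω hb
  obtain ⟨u, hui, huB⟩ := exists_aeval_sum_smul_X_eq_X b hji hbj
  set B : MvPolynomial σ K := ∑ k, b k • MvPolynomial.X k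
  have hB : B ∈ MvPolynomial.homogeneousSubmodule σ K 1 :=
    Submodule.sum_mem _ fun k _ => Submodule.smul_mem _ _ (MvPolynomial.isHomogeneous_X K k)
  have hBv : MvPolynomial.aeval v B = ω * v i := by
    simp only [B, map_sum, map_smul, MvPolynomial.aeval_X, hb]
  refine ⟨MvPolynomial.bind₁ ![B, MvPolynomial.X i] (f.homogenize s), ?_, fun hP => hf ?_, ?_⟩
  · simpa using (isHomogeneous_homogenize f).aeval ![B, MvPolynomial.X i]
      (Fin.forall_fin_two.mpr ⟨hB, MvPolynomial.isHomogeneous_X K i⟩)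
  · have hsubst : (fun k => MvPolynomial.aeval u (![B, MvPolynomial.X i] k)) = ![X, 1] := by
      ext k : 1; fin_cases k <;> simp [huB, hui]
    simpa [MvPolynomial.aeval_bind₁, hsubst, aeval_homogenize_X_one f hfs]
      using congr_arg (MvPolynomial.aeval u) hP
  · have hsubst :
        (fun k => MvPolynomial.aeval v (![B, MvPolynomial.X i] k)) = ![ω * v i, v i] := by
      ext k : 1; fin_cases k <;> simp [hBv]
    rw [MvPolynomial.aeval_bind₁, hsubst, aeval_homogenize hfs _ hv]
    simp [hv, hfω]

theorem stmt_15_general (q s : ℕ) (hs : 1 < s)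
    (Fq F E : Type) [Field Fq] [Fintype Fq] (hFq : Fintype.card Fq = q)
    [Field F] [Field E] [Algebra F E] [Algebra Fq E]
    (m n : ℕ) (hn : n = m * s) (hm : 1 ≤ m)
    (c : ℕ → F) (hm' : c m ≠ 0)
    (L : F[X]) (hL : L = ∑ i ∈ Finset.range (m + 1), C (c i) * X ^ (q ^ s) ^ i)
    (hsplit : L.IsSplittingField F E)
    (v : Fin n → E) (hroots : ∀ i, aeval (v i) L = 0)
    (hli : LinearIndependent Fq v)
    (hspan : (Submodule.span Fq (Set.range v) : Set E) = {x : E | aeval x L = 0}) :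
    ∃ P : MvPolynomial (Fin n) Fq,
      P ∈ MvPolynomial.homogeneousSubmodule (Fin n) Fq s ∧ P ≠ 0 ∧
      MvPolynomial.aeval v P = 0 := by
  subst hFq hL
  have hn0 : 0 < n := hn ▸ Nat.mul_pos hm (by omega : 0 < s)
  set i₀ : Fin n := ⟨0, hn0⟩
  have hL0 := sum_C_mul_X_pow_pow_ne_zero
    (Nat.one_lt_pow (by omega : s ≠ 0) (Fintype.one_lt_card (α := Fq)))
    (Finset.self_mem_range_succ m) hm'
  obtain ⟨ω, hωs, hωq⟩ :=
    FiniteField.exists_pow_card_pow_eq_self_and_pow_card_ne_self Fq (AlgebraicClosure E) hs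
  obtain ⟨ω, rfl⟩ := mem_range_algebraMap_of_aeval_mul_eq_zero hL0 hsplit.splits'
    (hli.ne_zero i₀) (by rw [aeval_mul_sum_C_mul_X_pow_pow hωs, aeval_algebraMap_apply,
      hroots, map_zero, mul_zero])
  replace hωs : ω ^ Fintype.card Fq ^ s = ω :=
    (algebraMap E (AlgebraicClosure E)).injective (by rwa [map_pow])
  have hω : ω ∉ Set.range (algebraMap Fq E) := by
    rintro ⟨t, rfl⟩
    exact hωq (by rw [← map_pow, ← map_pow, FiniteField.pow_card])
  have hmem : ω * v i₀ ∈ Submodule.span Fq (Set.range v) := by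
    rw [← SetLike.mem_coe, hspan, Set.mem_ofPred_eq, aeval_mul_sum_C_mul_X_pow_pow hωs, hroots,
      mul_zero]
  obtain ⟨f, hf, hfs, hfω⟩ := FiniteField.exists_aeval_eq_zero_of_pow_card_pow_eq_self
    (by omega) hωs
  obtain ⟨P, hPs, hP, hPv⟩ :=
    exists_isHomogeneous_ne_zero_aeval_eq_zero (hli.ne_zero i₀) hω hmem hf hfs hfω
  exact ⟨P, (MvPolynomial.mem_homogeneousSubmodule s P).mpr hPs, hP, hPv⟩

/-- If `s > 1` and `F` contains no copy of `F_{q^s}`, and `L` is a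
`q^s`-linearized polynomial over `F` with no repeated roots, then the evaluation map on
homogeneous polynomials of degree `s` at an `F_q`-basis of the root space is not
injective. -/
theorem stmt_15 (p a q s : ℕ) [Fact p.Prime] (ha : 0 < a) (hq : q = p ^ a) (hs : 1 < s)
    (Fq F E : Type) [Field Fq] [Fintype Fq] (hFq : Fintype.card Fq = q)
    [Field F] [CharP F p] [Algebra Fq F] [Field E] [Algebra F E] [Algebra Fq E]
    [IsScalarTower Fq F E]
    (hnotsub : ¬ ∃ K : Subfield F, Nat.card K = q ^ s)
    (m n : ℕ) (hn : n = m * s) (hm : 1 ≤ m)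
    (c : ℕ → F) (hm' : c m ≠ 0)
    (L : F[X]) (hL : L = ∑ i ∈ Finset.range (m + 1), C (c i) * X ^ (q ^ s) ^ i)
    (hsq : Squarefree L)
    (hsplit : L.IsSplittingField F E)
    (v : Fin n → E) (hroots : ∀ i, aeval (v i) L = 0)
    (hli : LinearIndependent Fq v)
    (hspan : (Submodule.span Fq (Set.range v) : Set E) = {x : E | aeval x L = 0}) :
    ∃ P : MvPolynomial (Fin n) Fq,
      P ∈ MvPolynomial.homogeneousSubmodule (Fin n) Fq s ∧ P ≠ 0 ∧
      MvPolynomial.aeval v P = 0 :=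
  stmt_15_general q s hs Fq F E hFq m n hn hm c hm' L hL hsplit v hroots hli hspan
end

section
/- Let L be a q-linearized polynomial in F_q[x] such that L(x)/x is irreducible over F_q. Then L is not a q^s-linearized polynomial for any s > 1. -/
/-!
Put `Q = q ^ s`, write `L = ∑ bᵢ X^(Qⁱ)` and let `g = ∑ bᵢ Xⁱ` be its conventional `Q`-associate,
of degree `m`. Irreducibility of `M = L / X` forces `b₀ ≠ 0`, so `X` is a unit modulo `g` and
`g ∣ X ^ T - 1` for some `0 < T < q ^ m`. For a root `α` of `M`, `g(σ) α = L(α) = 0` with `σ` the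
`s`-th power of the Frobenius, hence `α ^ (Q ^ T) = α`; so the Frobenius of `𝔽_q(α)`, whose order
is `deg M = q ^ (s m) - 1`, has order dividing `s T < s q ^ m`, which is too small when `s ≥ 2`.
-/

open Polynomial

namespace Polynomial

theorem coeff_sum_C_mul_X_pow_of_injective {R : Type*} [Semiring R] {e : ℕ → ℕ}
    (he : Function.Injective e) (b : ℕ → R) {m j : ℕ} (hj : j ≤ m) :
    (∑ i ∈ Finset.range (m + 1), C (b i) * X ^ e i).coeff (e j) = b j := by
  rw [finsetSum_coeff, Finset.sum_eq_single j]
  · simp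
  · intro i _ hij
    rw [coeff_C_mul_X_pow, if_neg (he.ne hij).symm]
  · exact fun hj' => absurd (Finset.mem_range.2 (Nat.lt_succ_of_le hj)) hj'

theorem natDegree_sum_C_mul_X_pow_of_strictMono {R : Type*} [Semiring R] {e : ℕ → ℕ}
    (he : StrictMono e) {b : ℕ → R} {m : ℕ} (hb : b m ≠ 0) :
    (∑ i ∈ Finset.range (m + 1), C (b i) * X ^ e i).natDegree = e m := by
  refine le_antisymm (natDegree_sum_le_of_forall_le _ _ fun i hi => ?_)
    (le_natDegree_of_ne_zero ?_)
  · exact (natDegree_C_mul_X_pow_le _ _).trans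
      (he.monotone (Nat.lt_succ_iff.1 (Finset.mem_range.1 hi)))
  · rwa [coeff_sum_C_mul_X_pow_of_injective he.injective b le_rfl]

theorem coeff_zero_ne_zero_of_irreducible {K : Type*} [Field K] {f : K[X]} (hf : Irreducible f)
    (hdeg : f.natDegree ≠ 1) : f.coeff 0 ≠ 0 := fun h => hdeg <| by
  rw [← natDegree_eq_of_degree_eq
    (degree_eq_degree_of_associated (irreducible_X.associated_of_dvd hf (X_dvd_iff.2 h))),
    natDegree_X]

theorem exists_dvd_X_pow_sub_one {F : Type*} [Field F] [Fintype F] {g : F[X]}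
    (hg : 0 < g.natDegree) (hg0 : g.coeff 0 ≠ 0) :
    ∃ T, 0 < T ∧ T < Fintype.card F ^ g.natDegree ∧ g ∣ X ^ T - 1 := by
  classical
  have hg' : g ≠ 0 := ne_zero_of_natDegree_gt hg
  let pb := AdjoinRoot.powerBasis hg'
  let _ : Fintype (AdjoinRoot g) := Module.fintypeOfFintype pb.basis
  have : Nontrivial (AdjoinRoot g) :=
    AdjoinRoot.nontrivial g (by rw [degree_eq_natDegree hg']; exact_mod_cast hg.ne')
  have hcard : Fintype.card (AdjoinRoot g) = Fintype.card F ^ g.natDegree := by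
    rw [Module.card_fintype pb.basis, Fintype.card_fin]; rfl
  obtain ⟨u, hu⟩ : IsUnit (AdjoinRoot.root g) := by
    obtain ⟨a, b, h⟩ := (irreducible_X.coprime_iff_not_dvd).2 (mt X_dvd_iff.1 hg0)
    refine .of_mul_eq_one_right (AdjoinRoot.mk g a) ?_
    simpa using congrArg (AdjoinRoot.mk g) h
  refine ⟨orderOf u, orderOf_pos u, ?_, ?_⟩
  · calc orderOf u ≤ Fintype.card (AdjoinRoot g)ˣ := orderOf_le_card_univ
      _ < _ := hcard ▸ card_units_lt _
  · rw [← AdjoinRoot.mk_eq_zero, map_sub, map_pow, AdjoinRoot.mk_X, map_one, ← hu,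
      ← Units.val_pow_eq_pow_val, pow_orderOf_eq_one, Units.val_one, sub_self]

end Polynomial

theorem Nat.mul_sub_one_lt_pow_sub_one {s t : ℕ} (hs : 1 < s) (ht : 1 < t) :
    s * (t - 1) < t ^ s - 1 := by
  induction s, hs using Nat.le_induction with
  | base =>
    have : 0 < (t - 1) * (t - 1) := Nat.mul_pos (by omega) (by omega)
    zify [ht.le, Nat.one_le_pow 2 t (by omega)] at this ⊢
    nlinarith
  | succ s hs ih =>
    have h := Nat.le_mul_of_pos_left (t - 1) (Nat.pow_pos (n := s) (by omega : 0 < t))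
    rw [Nat.mul_sub_one] at h
    rw [pow_succ, Nat.succ_mul]
    omega

namespace FiniteField

variable {F : Type*} [Field F] [Fintype F]

theorem frobeniusAlgHom_pow_apply_s16 {E : Type*} [CommRing E] [Algebra F E] (k : ℕ) (x : E) :
    (frobeniusAlgHom F E ^ k) x = x ^ Fintype.card F ^ k := by
  rw [AlgHom.coe_pow, coe_frobeniusAlgHom, pow_iterate]

theorem aeval_frobeniusAlgHom_pow_sum_C_mul_X_pow {E : Type*} [CommRing E] [Algebra F E]
    (s : ℕ) (b : ℕ → F) (m : ℕ) (x : E) :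
    aeval (frobeniusAlgHom F E ^ s).toLinearMap (∑ i ∈ Finset.range (m + 1), C (b i) * X ^ i) x =
      aeval x (∑ i ∈ Finset.range (m + 1), C (b i) * X ^ (Fintype.card F ^ s) ^ i) := by
  simp only [map_sum, LinearMap.sum_apply]
  refine Finset.sum_congr rfl fun i _ => ?_
  rw [map_mul, aeval_C, map_pow, aeval_X, Module.End.mul_apply, Module.algebraMap_end_apply,
    map_mul, aeval_C, aeval_X_pow, ← pow_mul, Module.End.pow_apply, AlgHom.coe_toLinearMap,
    ← AlgHom.coe_pow, ← pow_mul, frobeniusAlgHom_pow_apply_s16, Algebra.smul_def]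

theorem pow_card_pow_eq_self_of_dvd_X_pow_sub_one {E : Type*} [CommRing E] [Algebra F E]
    {s T : ℕ} {g : F[X]} {x : E} (hgT : g ∣ (X ^ T - 1 : F[X]))
    (hg : aeval (frobeniusAlgHom F E ^ s).toLinearMap g x = 0) :
    x ^ Fintype.card F ^ (s * T) = x := by
  obtain ⟨h, hh⟩ := hgT
  have hT : aeval (frobeniusAlgHom F E ^ s).toLinearMap (X ^ T - 1 : F[X]) x = 0 := by
    rw [hh, mul_comm, map_mul, Module.End.mul_apply, hg, map_zero]
  rwa [map_sub, map_pow, aeval_X, map_one, LinearMap.sub_apply, Module.End.one_apply,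
    Module.End.pow_apply, AlgHom.coe_toLinearMap, ← AlgHom.coe_pow, ← pow_mul,
    frobeniusAlgHom_pow_apply_s16, sub_eq_zero] at hT

/-- The Frobenius of the field `F[X] / M` has order `deg M`. -/
theorem natDegree_dvd_of_root_pow_card_pow_eq {M : F[X]} [Fact (Irreducible M)] {k : ℕ}
    (h : AdjoinRoot.root M ^ Fintype.card F ^ k = AdjoinRoot.root M) : M.natDegree ∣ k := by
  let pb := AdjoinRoot.powerBasis (Fact.out : Irreducible M).ne_zero
  have : Module.Finite F (AdjoinRoot M) := pb.finite
  have : Finite (AdjoinRoot M) := Module.finite_of_finite F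
  rw [show M.natDegree = Module.finrank F (AdjoinRoot M) from pb.finrank.symm,
    ← orderOf_frobeniusAlgHom]
  refine orderOf_dvd_of_pow_eq_one (AdjoinRoot.algHom_ext ?_)
  rw [frobeniusAlgHom_pow_apply_s16, h, AlgHom.one_apply]

theorem natDegree_dvd_of_X_mul_eq_sum_C_mul_X_pow_pow {M : F[X]} (hM : Irreducible M)
    {s m T : ℕ} {b : ℕ → F}
    (hL : X * M = ∑ i ∈ Finset.range (m + 1), C (b i) * X ^ (Fintype.card F ^ s) ^ i)
    (hT : (∑ i ∈ Finset.range (m + 1), C (b i) * X ^ i) ∣ (X ^ T - 1 : F[X])) :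
    M.natDegree ∣ s * T := by
  have := Fact.mk hM
  have hroot : aeval (AdjoinRoot.root M) (X * M) = 0 := by
    rw [map_mul, AdjoinRoot.aeval_eq M, AdjoinRoot.mk_self, mul_zero]
  refine natDegree_dvd_of_root_pow_card_pow_eq
    (pow_card_pow_eq_self_of_dvd_X_pow_sub_one (s := s) hT ?_)
  rwa [aeval_frobeniusAlgHom_pow_sum_C_mul_X_pow, ← hL]

end FiniteField

open FiniteField in
theorem stmt_16_general (q : ℕ) (Fq : Type) [Field Fq] [Fintype Fq] (hFq : Fintype.card Fq = q)
    (L : Polynomial Fq) (M : Polynomial Fq) (hM : L = X * M) (hirr : Irreducible M) :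
    ∀ s : ℕ, 1 < s →
      ¬ ∃ (m : ℕ) (b : ℕ → Fq), b m ≠ 0 ∧
        L = ∑ i ∈ Finset.range (m + 1), C (b i) * X ^ (q ^ s) ^ i := by
  rintro s hs ⟨m, b, hbm, hLb⟩
  subst hFq hM
  have hq : 1 < Fintype.card Fq := Fintype.one_lt_card
  have hQ : 1 < Fintype.card Fq ^ s := Nat.one_lt_pow (by omega) hq
  have hMdeg : M.natDegree = (Fintype.card Fq ^ m) ^ s - 1 := by
    rw [← pow_right_comm, ← natDegree_sum_C_mul_X_pow_of_strictMono (pow_right_strictMono₀ hQ) hbm,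
      ← hLb, natDegree_X_mul hirr.ne_zero, Nat.add_sub_cancel]
  have hm : m ≠ 0 := by
    rintro rfl
    exact hirr.natDegree_pos.ne' (by simpa using hMdeg)
  have hMdeg_gt := hMdeg ▸ Nat.mul_sub_one_lt_pow_sub_one hs (Nat.one_lt_pow hm hq)
  have hMdeg_ne_one : M.natDegree ≠ 1 := by
    have : 2 * 1 ≤ s * (Fintype.card Fq ^ m - 1) :=
      Nat.mul_le_mul hs (Nat.le_sub_of_add_le (Nat.one_lt_pow hm hq))
    omega
  have hb0 : b 0 ≠ 0 := by
    have hL1 := coeff_sum_C_mul_X_pow_of_injective (pow_right_strictMono₀ hQ).injective b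
      (Nat.zero_le m)
    rw [pow_zero, ← hLb, ← zero_add 1, coeff_X_mul] at hL1
    exact hL1 ▸ coeff_zero_ne_zero_of_irreducible hirr hMdeg_ne_one
  have hgdeg := natDegree_sum_C_mul_X_pow_of_strictMono strictMono_id hbm
  have hg0 := coeff_sum_C_mul_X_pow_of_injective Function.injective_id b (Nat.zero_le m)
  obtain ⟨T, hT, hTlt, hgT⟩ := exists_dvd_X_pow_sub_one (hgdeg ▸ Nat.pos_of_ne_zero hm) (hg0 ▸ hb0)
  rw [hgdeg, id] at hTlt
  have hdvd := natDegree_dvd_of_X_mul_eq_sum_C_mul_X_pow_pow hirr hLb hgT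
  have hle := Nat.le_of_dvd (Nat.mul_pos (by omega) hT) hdvd
  have : s * T ≤ s * (Fintype.card Fq ^ m - 1) := Nat.mul_le_mul_left s (by omega)
  omega

/-- If `L ∈ F_q[x]` is q-linearized with `L(x)/x` irreducible over `F_q`,
then `L` is not a `q^s`-linearized polynomial for any `s > 1`. -/
theorem stmt_16 (p a q n : ℕ) [Fact p.Prime] (ha : 0 < a) (hq : q = p ^ a)
    (Fq : Type) [Field Fq] [Fintype Fq] (hFq : Fintype.card Fq = q)
    (c : ℕ → Fq) (hn : c n ≠ 0)
    (L : Polynomial Fq) (hL : L = ∑ i ∈ Finset.range (n + 1), C (c i) * X ^ q ^ i)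
    (M : Polynomial Fq) (hM : L = X * M) (hirr : Irreducible M) :
    ∀ s : ℕ, 1 < s →
      ¬ ∃ (m : ℕ) (b : ℕ → Fq), b m ≠ 0 ∧
        L = ∑ i ∈ Finset.range (m + 1), C (b i) * X ^ (q ^ s) ^ i :=
  stmt_16_general q Fq hFq L M hM hirr
end
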